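/- arXiv:2210.09120 — 6 statements merged into one kernel-verified Lean document; each statement's English description precedes it below -/
import Mathlib

section
/- Let d ≥ 3 be an integer and ω ∈ ℝ. Let u, v ∈ C²([0,∞)) solve the radial stationary Schrödinger–Newton–Hooke system −u″ − ((d−1)/r)u′ + r²u + v·u = ω·u and v″ + ((d−1)/r)v′ = u² for r > 0, with u′(0) = v′(0) = 0. Assume there are C, ε > 0 with |u(r)| + |u′(r)| ≤ C e^{−εr} for all r ≥ 0, and that v(r) → 0 as r → ∞. Then the Pohozaev identity (d−6)·∫₀^∞ u′(r)² r^{d−1} dr + (d+2)·∫₀^∞ r² u(r)² r^{d−1} dr = ω·(d−2)·∫₀^∞ u(r)² r^{d−1} dr holds. In particular, if d ≥ 6 and u is not identically zero, then ω ≥ 0. -/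
open Set MeasureTheory Filter

/-- One-sided derivative on `[0,∞)`. -/
noncomputable def dI (u : ℝ → ℝ) : ℝ → ℝ := derivWithin u (Set.Ici 0)

/-- `u` is of class `C²` on `[0,∞)` (with one-sided derivatives at `0`). -/
def C2Ici (u : ℝ → ℝ) : Prop :=
  (∀ r ∈ Set.Ici (0:ℝ), DifferentiableWithinAt ℝ u (Set.Ici 0) r) ∧
  (∀ r ∈ Set.Ici (0:ℝ), DifferentiableWithinAt ℝ (dI u) (Set.Ici 0) r) ∧
  ContinuousOn (dI (dI u)) (Set.Ici 0)

namespace SNH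

lemma hasDerivAt_of_diff {f : ℝ → ℝ}
    (hf : ∀ r ∈ Set.Ici (0:ℝ), DifferentiableWithinAt ℝ f (Set.Ici 0) r)
    {r : ℝ} (hr : 0 < r) : HasDerivAt f (dI f r) r :=
  ((hf r hr.le).hasDerivWithinAt).hasDerivAt (Ici_mem_nhds hr)

lemma contOn_of_diff {f : ℝ → ℝ}
    (hf : ∀ r ∈ Set.Ici (0:ℝ), DifferentiableWithinAt ℝ f (Set.Ici 0) r) :
    ContinuousOn f (Set.Ici 0) := fun r hr => (hf r hr).continuousWithinAt

lemma tendsto_pow_mul_exp (m : ℕ) {b : ℝ} (hb : 0 < b) :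
    Tendsto (fun r : ℝ => r ^ m * Real.exp (-(b * r))) atTop (nhds 0) := by
  have h1 : Tendsto (fun r : ℝ => b * r) atTop atTop :=
    Filter.tendsto_id.const_mul_atTop hb
  have h2 := (Real.tendsto_pow_mul_exp_neg_atTop_nhds_zero m).comp h1
  have h3 := h2.div_const (b ^ m)
  simp only [zero_div] at h3
  refine h3.congr fun r => ?_
  have hbm : (b:ℝ) ^ m ≠ 0 := by positivity
  simp only [Function.comp_apply, mul_pow]
  field_simp

lemma pow_mul_exp_le (m : ℕ) {ε r : ℝ} (hε : 0 < ε) (hr : 0 ≤ r) :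
    r ^ m * Real.exp (-(2 * ε) * r) ≤ (m.factorial / ε ^ m) * Real.exp (-ε * r) := by
  have h3 := Real.pow_div_factorial_le_exp (x := ε * r) (by positivity) m
  have hfac : (0:ℝ) < (m.factorial : ℝ) := by positivity
  have h4 : r ^ m ≤ (m.factorial / ε ^ m) * Real.exp (ε * r) := by
    rw [div_le_iff₀ hfac, mul_pow] at h3
    rw [div_mul_eq_mul_div, le_div_iff₀ (by positivity)]
    nlinarith [h3]
  have h5 : Real.exp (ε * r) * Real.exp (-(2 * ε) * r) = Real.exp (-ε * r) := by
    rw [← Real.exp_add]; ring_nf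
  calc r ^ m * Real.exp (-(2 * ε) * r)
      ≤ ((m.factorial / ε ^ m) * Real.exp (ε * r)) * Real.exp (-(2 * ε) * r) := by
        apply mul_le_mul_of_nonneg_right h4 (Real.exp_nonneg _)
    _ = (m.factorial / ε ^ m) * Real.exp (-ε * r) := by rw [mul_assoc, h5]

lemma integrableOn_of_decay {f : ℝ → ℝ} (m : ℕ) {ε K : ℝ} (hε : 0 < ε)
    (hm : AEStronglyMeasurable f (MeasureTheory.volume.restrict (Set.Ioi 0)))
    (hb : ∀ r ∈ Set.Ioi (0:ℝ), |f r| ≤ K * (r ^ m * Real.exp (-(2 * ε) * r))) :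
    MeasureTheory.IntegrableOn f (Set.Ioi 0) := by
  have hK : 0 ≤ K := by
    have := hb 1 (by norm_num)
    rw [one_pow] at this
    nlinarith [Real.exp_pos (-(2 * ε) * (1:ℝ)), abs_nonneg (f 1)]
  have hint : MeasureTheory.IntegrableOn
      (fun r : ℝ => (K * (m.factorial / ε ^ m)) * Real.exp (-ε * r)) (Set.Ioi 0) :=
    (exp_neg_integrableOn_Ioi 0 hε).const_mul _
  refine hint.mono' hm ?_
  rw [MeasureTheory.ae_restrict_iff' measurableSet_Ioi]
  filter_upwards with r hr
  have h1 := hb r hr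
  have h2 := pow_mul_exp_le m hε (le_of_lt hr)
  calc ‖f r‖ = |f r| := rfl
    _ ≤ K * (r ^ m * Real.exp (-(2 * ε) * r)) := h1
    _ ≤ K * ((m.factorial / ε ^ m) * Real.exp (-ε * r)) := by
        apply mul_le_mul_of_nonneg_left h2 hK
    _ = (K * (m.factorial / ε ^ m)) * Real.exp (-ε * r) := by ring

/-- The magic antiderivative for the Pohozaev identity. -/
noncomputable def G (n : ℕ) (ω : ℝ) (u v : ℝ → ℝ) : ℝ → ℝ := fun r =>
  -2*(r^(n+3)*(dI u r)^2) - ((n:ℝ)+5)*(r^(n+2)*(u r*dI u r)) + 2*(r^(n+5)*(u r)^2)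
  - (2*ω)*(r^(n+3)*(u r)^2) + 2*(v r*(r^(n+3)*(u r)^2)) - r^(n+3)*(dI v r)^2
  - ((n:ℝ)+1)*(v r*(r^(n+2)*dI v r))

lemma G_hasDerivAt (n : ℕ) (ω : ℝ) (u v : ℝ → ℝ) {r : ℝ} (hr : 0 < r)
    (Hu : HasDerivAt u (dI u r) r) (Hu' : HasDerivAt (dI u) (dI (dI u) r) r)
    (Hv : HasDerivAt v (dI v r) r) (Hv' : HasDerivAt (dI v) (dI (dI v) r) r)
    (hu2 : dI (dI u) r = r^2*u r + v r*u r - ω*u r - (((n:ℝ)+3)-1)/r*dI u r)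
    (hv2 : dI (dI v) r = (u r)^2 - (((n:ℝ)+3)-1)/r*dI v r) :
    HasDerivAt (G n ω u v)
      (((n:ℝ)-3)*((dI u r)^2*r^(n+2)) + ((n:ℝ)+5)*(r^2*(u r)^2*r^(n+2))
        - ω*((n:ℝ)+1)*((u r)^2*r^(n+2))) r := by
  have h1 : HasDerivAt (fun s:ℝ => s^(n+3)) (((n:ℝ)+3)*r^(n+2)) r := by
    simpa using hasDerivAt_pow (n+3) r
  have h2 : HasDerivAt (fun s:ℝ => s^(n+2)) (((n:ℝ)+2)*r^(n+1)) r := by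
    simpa using hasDerivAt_pow (n+2) r
  have h3 : HasDerivAt (fun s:ℝ => s^(n+5)) (((n:ℝ)+5)*r^(n+4)) r := by
    simpa using hasDerivAt_pow (n+5) r
  have D := (((((((h1.mul (Hu'.pow 2)).const_mul (-2:ℝ)).sub
      ((h2.mul (Hu.mul Hu')).const_mul ((n:ℝ)+5))).add
      ((h3.mul (Hu.pow 2)).const_mul (2:ℝ))).sub
      ((h1.mul (Hu.pow 2)).const_mul (2*ω))).add
      ((Hv.mul (h1.mul (Hu.pow 2))).const_mul (2:ℝ))).sub
      (h1.mul (Hv'.pow 2))).sub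
      ((Hv.mul (h2.mul Hv')).const_mul ((n:ℝ)+1))
  refine D.congr_deriv ?_
  rw [hu2, hv2]
  simp only [Pi.mul_apply, Pi.pow_apply]
  field_simp
  ring

end SNH

set_option maxHeartbeats 1000000 in
/-- Pohozaev identity for the radial stationary Schrödinger–Newton–Hooke system;
in critical and supercritical dimensions (`d ≥ 6`) nontrivial bound states have `ω ≥ 0`. -/
theorem stmt6 (d : ℕ) (hd : 3 ≤ d) (ω : ℝ) (u v : ℝ → ℝ)
    (hu : C2Ici u) (hv : C2Ici v)
    (hequ : ∀ r : ℝ, 0 < r →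
      -dI (dI u) r - ((d:ℝ) - 1) / r * dI u r + r^2 * u r + v r * u r = ω * u r)
    (heqv : ∀ r : ℝ, 0 < r →
      dI (dI v) r + ((d:ℝ) - 1) / r * dI v r = (u r)^2)
    (hu'0 : dI u 0 = 0) (hv'0 : dI v 0 = 0)
    (C ε : ℝ) (hC : 0 < C) (hε : 0 < ε)
    (hdecay : ∀ r : ℝ, 0 ≤ r → |u r| + |dI u r| ≤ C * Real.exp (-ε * r))
    (hvlim : Tendsto v atTop (nhds 0)) :
    ((d:ℝ) - 6) * (∫ r in Ioi (0:ℝ), (dI u r)^2 * r^(d-1))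
      + ((d:ℝ) + 2) * (∫ r in Ioi (0:ℝ), r^2 * (u r)^2 * r^(d-1))
      = ω * ((d:ℝ) - 2) * (∫ r in Ioi (0:ℝ), (u r)^2 * r^(d-1))
    ∧ (6 ≤ d → (∃ r : ℝ, 0 ≤ r ∧ u r ≠ 0) → 0 ≤ ω) := by
  obtain ⟨n, rfl⟩ : ∃ n, d = n + 3 := ⟨d - 3, by omega⟩
  have e1 : n + 3 - 1 = n + 2 := rfl
  simp only [e1]
  push_cast
  -- basic facts
  have hud : ∀ {r:ℝ}, 0 < r → HasDerivAt u (dI u r) r :=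
    fun hr => SNH.hasDerivAt_of_diff hu.1 hr
  have hu'd : ∀ {r:ℝ}, 0 < r → HasDerivAt (dI u) (dI (dI u) r) r :=
    fun hr => SNH.hasDerivAt_of_diff hu.2.1 hr
  have hvd : ∀ {r:ℝ}, 0 < r → HasDerivAt v (dI v r) r :=
    fun hr => SNH.hasDerivAt_of_diff hv.1 hr
  have hv'd : ∀ {r:ℝ}, 0 < r → HasDerivAt (dI v) (dI (dI v) r) r :=
    fun hr => SNH.hasDerivAt_of_diff hv.2.1 hr
  have hucont : ContinuousOn u (Ici 0) := SNH.contOn_of_diff hu.1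
  have hu'cont : ContinuousOn (dI u) (Ici 0) := SNH.contOn_of_diff hu.2.1
  have hvcont : ContinuousOn v (Ici 0) := SNH.contOn_of_diff hv.1
  have hv'cont : ContinuousOn (dI v) (Ici 0) := SNH.contOn_of_diff hv.2.1
  have hmono : Set.Ioi (0:ℝ) ⊆ Set.Ici 0 := Ioi_subset_Ici_self
  have hu_le : ∀ r:ℝ, 0 ≤ r → |u r| ≤ C * Real.exp (-ε*r) :=
    fun r hr => le_trans (le_add_of_nonneg_right (abs_nonneg _)) (hdecay r hr)
  have hu'_le : ∀ r:ℝ, 0 ≤ r → |dI u r| ≤ C * Real.exp (-ε*r) :=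
    fun r hr => le_trans (le_add_of_nonneg_left (abs_nonneg _)) (hdecay r hr)
  have hexp2 : ∀ r:ℝ, Real.exp (-ε*r) * Real.exp (-ε*r) = Real.exp (-(2*ε)*r) := by
    intro r; rw [← Real.exp_add]; ring_nf
  -- rearranged ODEs
  have hu2 : ∀ r:ℝ, 0 < r →
      dI (dI u) r = r^2*u r + v r*u r - ω*u r - (((n:ℝ)+3)-1)/r*dI u r := by
    intro r hr
    have h := hequ r hr
    push_cast at h
    linarith
  have hv2 : ∀ r:ℝ, 0 < r →
      dI (dI v) r = (u r)^2 - (((n:ℝ)+3)-1)/r*dI v r := by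
    intro r hr
    have h := heqv r hr
    push_cast at h
    linarith
  -- generic bound on products
  have bnd : ∀ (m : ℕ) (r x y : ℝ), 0 ≤ r → |x| ≤ C * Real.exp (-ε*r) →
      |y| ≤ C * Real.exp (-ε*r) → |r ^ m * (x * y)| ≤ C^2 * (r ^ m * Real.exp (-(2*ε)*r)) := by
    intro m r x y hr hx hy
    have h0 : 0 ≤ C * Real.exp (-ε*r) := le_trans (abs_nonneg x) hx
    calc |r^m*(x*y)| = r^m * (|x| * |y|) := by
          rw [abs_mul, abs_mul, abs_pow, abs_of_nonneg hr]
      _ ≤ r^m * ((C * Real.exp (-ε*r))*(C * Real.exp (-ε*r))) := by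
          apply mul_le_mul_of_nonneg_left (mul_le_mul hx hy (abs_nonneg _) h0) (pow_nonneg hr m)
      _ = C^2*(r^m*(Real.exp (-ε*r) * Real.exp (-ε*r))) := by ring
      _ = C^2*(r^m* Real.exp (-(2*ε)*r)) := by rw [hexp2 r]
  -- integrability of the three integrands
  have hI1 : IntegrableOn (fun r:ℝ => (dI u r)^2*r^(n+2)) (Ioi 0) := by
    apply SNH.integrableOn_of_decay (n+2) hε (K := C^2)
    · exact (((hu'cont.mono hmono).pow 2).mul
        ((continuous_pow (n+2)).continuousOn)).aestronglyMeasurable measurableSet_Ioi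
    · intro r hr
      have hr0 : (0:ℝ) ≤ r := le_of_lt hr
      have : (dI u r)^2*r^(n+2) = r^(n+2)*(dI u r * dI u r) := by ring
      rw [this]
      exact bnd (n+2) r _ _ hr0 (hu'_le r hr0) (hu'_le r hr0)
  have hI2 : IntegrableOn (fun r:ℝ => r^2*(u r)^2*r^(n+2)) (Ioi 0) := by
    apply SNH.integrableOn_of_decay (n+4) hε (K := C^2)
    · exact ((((continuous_pow 2).continuousOn).mul ((hucont.mono hmono).pow 2)).mul
        ((continuous_pow (n+2)).continuousOn)).aestronglyMeasurable measurableSet_Ioi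
    · intro r hr
      have hr0 : (0:ℝ) ≤ r := le_of_lt hr
      have : r^2*(u r)^2*r^(n+2) = r^(n+4)*(u r * u r) := by ring
      rw [this]
      exact bnd (n+4) r _ _ hr0 (hu_le r hr0) (hu_le r hr0)
  have hI0 : IntegrableOn (fun r:ℝ => (u r)^2*r^(n+2)) (Ioi 0) := by
    apply SNH.integrableOn_of_decay (n+2) hε (K := C^2)
    · exact (((hucont.mono hmono).pow 2).mul
        ((continuous_pow (n+2)).continuousOn)).aestronglyMeasurable measurableSet_Ioi
    · intro r hr
      have hr0 : (0:ℝ) ≤ r := le_of_lt hr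
      have : (u r)^2*r^(n+2) = r^(n+2)*(u r * u r) := by ring
      rw [this]
      exact bnd (n+2) r _ _ hr0 (hu_le r hr0) (hu_le r hr0)
  have hIH : IntegrableOn (fun r:ℝ => r^(n+2)*(u r)^2) (Ioi 0) := by
    apply SNH.integrableOn_of_decay (n+2) hε (K := C^2)
    · exact (((continuous_pow (n+2)).continuousOn).mul
        ((hucont.mono hmono).pow 2)).aestronglyMeasurable measurableSet_Ioi
    · intro r hr
      have hr0 : (0:ℝ) ≤ r := le_of_lt hr
      have : r^(n+2)*(u r)^2 = r^(n+2)*(u r * u r) := by ring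
      rw [this]
      exact bnd (n+2) r _ _ hr0 (hu_le r hr0) (hu_le r hr0)
  -- the function H r = r^(n+2) * v'(r) and its limit M
  set H : ℝ → ℝ := fun r => r^(n+2) * dI v r with hHdef
  have hHd : ∀ r:ℝ, 0 < r → HasDerivAt H (r^(n+2) * (u r)^2) r := by
    intro r hr
    have h2 : HasDerivAt (fun s:ℝ => s^(n+2)) (((n:ℝ)+2)*r^(n+1)) r := by
      simpa using hasDerivAt_pow (n+2) r
    have D := h2.mul (hv'd hr)
    refine D.congr_deriv ?_
    rw [hv2 r hr]
    field_simp
    ring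
  have hHcont : ContinuousOn H (Ici 0) := ((continuous_pow (n+2)).continuousOn).mul hv'cont
  set M : ℝ := ∫ s in Ioi (0:ℝ), s^(n+2) * (u s)^2 with hMdef
  have hH0 : H 0 = 0 := by
    have hz : (0:ℝ)^(n+2) = 0 := zero_pow (by omega)
    simp [hHdef, hz]
  have hHr : ∀ r:ℝ, 0 ≤ r → H r = ∫ s in (0:ℝ)..r, s^(n+2) * (u s)^2 := by
    intro r hr
    have hii : IntervalIntegrable (fun s:ℝ => s^(n+2) * (u s)^2) volume 0 r := by
      rw [intervalIntegrable_iff, uIoc_of_le hr]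
      exact hIH.mono_set Ioc_subset_Ioi_self
    have := intervalIntegral.integral_eq_sub_of_hasDeriv_right_of_le hr
      (hHcont.mono Icc_subset_Ici_self)
      (fun x hx => (hHd x hx.1).hasDerivWithinAt) hii
    rw [this, hH0, sub_zero]
  have hHtend : Tendsto H atTop (nhds M) := by
    have h1 := MeasureTheory.intervalIntegral_tendsto_integral_Ioi 0 hIH tendsto_id
    apply h1.congr'
    filter_upwards [Ici_mem_atTop (0:ℝ)] with r hr
    exact (hHr r hr).symm
  -- tendsto-to-zero of all pieces of G
  have tpow : ∀ m:ℕ, Tendsto (fun r:ℝ => C^2 * (r^m * Real.exp (-(2*ε)*r))) atTop (nhds 0) := by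
    intro m
    have h2 : (0:ℝ) < 2*ε := by positivity
    have h1 := (SNH.tendsto_pow_mul_exp m h2).const_mul (C^2)
    rw [mul_zero] at h1
    apply h1.congr
    intro r
    rw [neg_mul]
  have sq0 : ∀ (m:ℕ) (w1 w2 : ℝ → ℝ), (∀ r:ℝ, 0 ≤ r → |w1 r| ≤ C * Real.exp (-ε*r)) →
      (∀ r:ℝ, 0 ≤ r → |w2 r| ≤ C * Real.exp (-ε*r)) →
      Tendsto (fun r:ℝ => r^m * (w1 r * w2 r)) atTop (nhds 0) := by
    intro m w1 w2 hw1 hw2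
    apply squeeze_zero_norm' _ (tpow m)
    filter_upwards [Ici_mem_atTop (0:ℝ)] with r hr
    exact bnd m r _ _ hr (hw1 r hr) (hw2 r hr)
  have tA : Tendsto (fun r:ℝ => r^(n+3)*(dI u r)^2) atTop (nhds 0) := by
    have := sq0 (n+3) (dI u) (dI u) hu'_le hu'_le
    apply this.congr
    intro r; ring
  have tB : Tendsto (fun r:ℝ => r^(n+2)*(u r*dI u r)) atTop (nhds 0) :=
    sq0 (n+2) u (dI u) hu_le hu'_le
  have tC : Tendsto (fun r:ℝ => r^(n+5)*(u r)^2) atTop (nhds 0) := by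
    have := sq0 (n+5) u u hu_le hu_le
    apply this.congr
    intro r; ring
  have tD : Tendsto (fun r:ℝ => r^(n+3)*(u r)^2) atTop (nhds 0) := by
    have := sq0 (n+3) u u hu_le hu_le
    apply this.congr
    intro r; ring
  have tE : Tendsto (fun r:ℝ => v r * (r^(n+3)*(u r)^2)) atTop (nhds 0) := by
    have := hvlim.mul tD
    rw [mul_zero] at this
    exact this
  have tG2 : Tendsto (fun r:ℝ => v r * H r) atTop (nhds 0) := by
    have := hvlim.mul hHtend
    rw [zero_mul] at this
    exact this
  have tF : Tendsto (fun r:ℝ => r^(n+3)*(dI v r)^2) atTop (nhds 0) := by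
    have h1 : Tendsto (fun r:ℝ => (H r)^2 * (r^(n+1))⁻¹) atTop (nhds (M^2 * 0)) := by
      apply (hHtend.pow 2).mul
      exact (tendsto_pow_atTop (by omega : n+1 ≠ 0)).inv_tendsto_atTop
    rw [mul_zero] at h1
    apply h1.congr'
    filter_upwards [eventually_gt_atTop (0:ℝ)] with r hr
    have hrne : r ≠ 0 := ne_of_gt hr
    simp only [hHdef]
    field_simp
    ring
  have hGtend : Tendsto (SNH.G n ω u v) atTop (nhds 0) := by
    have big := (((((((tA.const_mul (-2:ℝ)).sub (tB.const_mul ((n:ℝ)+5))).add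
      (tC.const_mul 2)).sub (tD.const_mul (2*ω))).add (tE.const_mul 2)).sub tF).sub
      (tG2.const_mul ((n:ℝ)+1)))
    norm_num at big
    apply big.congr
    intro r
    simp only [hHdef, SNH.G]
    ring
  -- FTC on (0,∞)
  set g : ℝ → ℝ := fun r => ((n:ℝ)-3)*((dI u r)^2*r^(n+2)) + ((n:ℝ)+5)*(r^2*(u r)^2*r^(n+2))
    - ω*((n:ℝ)+1)*((u r)^2*r^(n+2)) with hgdef
  have hIg : IntegrableOn g (Ioi 0) :=
    ((hI1.const_mul _).add (hI2.const_mul _)).sub (hI0.const_mul _)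
  have hGd : ∀ r ∈ Ioi (0:ℝ), HasDerivAt (SNH.G n ω u v) (g r) r := fun r hr =>
    SNH.G_hasDerivAt n ω u v hr (hud hr) (hu'd hr) (hvd hr) (hv'd hr) (hu2 r hr) (hv2 r hr)
  have hGcont : ContinuousWithinAt (SNH.G n ω u v) (Ici 0) 0 := by
    have hcont : ContinuousOn (SNH.G n ω u v) (Ici 0) := by
      unfold SNH.G
      apply ContinuousOn.sub
      apply ContinuousOn.sub
      apply ContinuousOn.add
      apply ContinuousOn.sub
      apply ContinuousOn.add
      apply ContinuousOn.sub
      · exact continuousOn_const.mul (((continuous_pow (n+3)).continuousOn).mul (hu'cont.pow 2))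
      · exact continuousOn_const.mul (((continuous_pow (n+2)).continuousOn).mul (hucont.mul hu'cont))
      · exact continuousOn_const.mul (((continuous_pow (n+5)).continuousOn).mul (hucont.pow 2))
      · exact continuousOn_const.mul (((continuous_pow (n+3)).continuousOn).mul (hucont.pow 2))
      · exact continuousOn_const.mul (hvcont.mul (((continuous_pow (n+3)).continuousOn).mul (hucont.pow 2)))
      · exact ((continuous_pow (n+3)).continuousOn).mul (hv'cont.pow 2)
      · exact continuousOn_const.mul (hvcont.mul (((continuous_pow (n+2)).continuousOn).mul hv'cont))
    exact hcont 0 self_mem_Ici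
  have hG0 : SNH.G n ω u v 0 = 0 := by
    have h3 : (0:ℝ)^(n+3) = 0 := zero_pow (by omega)
    have h2 : (0:ℝ)^(n+2) = 0 := zero_pow (by omega)
    have h5 : (0:ℝ)^(n+5) = 0 := zero_pow (by omega)
    simp [SNH.G, h3, h2, h5]
  have key : ∫ r in Ioi (0:ℝ), g r = 0 - SNH.G n ω u v 0 :=
    MeasureTheory.integral_Ioi_of_hasDerivAt_of_tendsto hGcont hGd hIg hGtend
  rw [hG0, sub_zero] at key
  have hsplit : ∫ r in Ioi (0:ℝ), g r
      = ((n:ℝ)-3) * (∫ r in Ioi (0:ℝ), (dI u r)^2*r^(n+2))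
        + ((n:ℝ)+5) * (∫ r in Ioi (0:ℝ), r^2*(u r)^2*r^(n+2))
        - ω*((n:ℝ)+1) * (∫ r in Ioi (0:ℝ), (u r)^2*r^(n+2)) := by
    have hJ1 : IntegrableOn (fun r:ℝ => ((n:ℝ)-3)*((dI u r)^2*r^(n+2))) (Ioi 0) :=
      hI1.const_mul _
    have hJ2 : IntegrableOn (fun r:ℝ => ((n:ℝ)+5)*(r^2*(u r)^2*r^(n+2))) (Ioi 0) :=
      hI2.const_mul _
    have hJ0 : IntegrableOn (fun r:ℝ => ω*((n:ℝ)+1)*((u r)^2*r^(n+2))) (Ioi 0) :=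
      hI0.const_mul _
    have hJ12 : IntegrableOn (fun r:ℝ => ((n:ℝ)-3)*((dI u r)^2*r^(n+2))
        + ((n:ℝ)+5)*(r^2*(u r)^2*r^(n+2))) (Ioi 0) := hJ1.add hJ2
    simp only [hgdef]
    rw [MeasureTheory.integral_sub hJ12 hJ0, MeasureTheory.integral_add hJ1 hJ2,
       MeasureTheory.integral_const_mul, MeasureTheory.integral_const_mul,
       MeasureTheory.integral_const_mul]
  rw [hsplit] at key
  constructor
  · linear_combination key
  · rintro hd6 ⟨r0, hr0, hur0⟩
    have hI1nonneg : 0 ≤ ∫ r in Ioi (0:ℝ), (dI u r)^2*r^(n+2) := by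
      apply setIntegral_nonneg measurableSet_Ioi
      intro x hx
      have hx0 : (0:ℝ) < x := hx
      positivity
    have hI0nonneg : 0 ≤ ∫ r in Ioi (0:ℝ), (u r)^2*r^(n+2) := by
      apply setIntegral_nonneg measurableSet_Ioi
      intro x hx
      have hx0 : (0:ℝ) < x := hx
      positivity
    -- find a positive point where u is nonzero
    obtain ⟨r1, hr1pos, hur1⟩ : ∃ r1 : ℝ, 0 < r1 ∧ u r1 ≠ 0 := by
      rcases eq_or_lt_of_le hr0 with heq | hlt
      · have hu0 : u 0 ≠ 0 := by rw [← heq] at hur0; exact hur0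
        have hev : ∀ᶠ x in nhdsWithin 0 (Ici (0:ℝ)), u x ≠ 0 :=
          (hucont 0 self_mem_Ici) (isOpen_ne.mem_nhds hu0)
        have hle : nhdsWithin (0:ℝ) (Ioi 0) ≤ nhdsWithin 0 (Ici (0:ℝ)) :=
          nhdsWithin_mono _ Ioi_subset_Ici_self
        have hev2 : ∀ᶠ x in nhdsWithin (0:ℝ) (Ioi 0), u x ≠ 0 ∧ x ∈ Ioi (0:ℝ) :=
          (hev.filter_mono hle).and self_mem_nhdsWithin
        obtain ⟨x, hx1, hx2⟩ := hev2.exists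
        exact ⟨x, hx2, hx1⟩
      · exact ⟨r0, hlt, hur0⟩
    have hI2pos : 0 < ∫ r in Ioi (0:ℝ), r^2*(u r)^2*r^(n+2) := by
      have hae : 0 ≤ᵐ[volume.restrict (Ioi (0:ℝ))] (fun r:ℝ => r^2*(u r)^2*r^(n+2)) := by
        filter_upwards [MeasureTheory.ae_restrict_mem measurableSet_Ioi] with x hx
        have hx0 : (0:ℝ) < x := hx
        show (0:ℝ) ≤ x^2*(u x)^2*x^(n+2)
        positivity
      rw [setIntegral_pos_iff_support_of_nonneg_ae hae hI2]
      have hcontu : ContinuousAt u r1 := (hud hr1pos).continuousAt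
      have hev : ∀ᶠ x in nhds r1, u x ≠ 0 ∧ 0 < x :=
        ((hcontu.eventually_ne hur1).and (eventually_gt_nhds hr1pos))
      obtain ⟨δ, hδpos, hδ⟩ := Metric.eventually_nhds_iff.mp hev
      have hsub : Set.Ioo (r1 - δ/2) (r1 + δ/2) ⊆
          Function.support (fun r:ℝ => r^2*(u r)^2*r^(n+2)) ∩ Ioi 0 := by
        intro x hx
        have hdist : dist x r1 < δ := by
          rw [Real.dist_eq, abs_lt]
          constructor
          · linarith [hx.1]
          · linarith [hx.2]
        obtain ⟨hne, hpos⟩ := hδ hdist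
        have h2 : 0 < (u x)^2 := lt_of_le_of_ne (sq_nonneg _) (Ne.symm (pow_ne_zero 2 hne))
        constructor
        · simp only [Function.mem_support]
          exact ne_of_gt (mul_pos (mul_pos (pow_pos hpos 2) h2) (pow_pos hpos (n+2)))
        · exact hpos
      have hmeaspos : (0:ENNReal) < volume (Set.Ioo (r1 - δ/2) (r1 + δ/2)) := by
        rw [Real.volume_Ioo]
        rw [ENNReal.ofReal_pos]
        linarith
      exact lt_of_lt_of_le hmeaspos (measure_mono hsub)
    have hn3 : (3:ℝ) ≤ (n:ℝ) := by
      have : 3 ≤ n := by omega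
      exact_mod_cast this
    have h1 : 0 ≤ ((n:ℝ)-3) * (∫ r in Ioi (0:ℝ), (dI u r)^2*r^(n+2)) :=
      mul_nonneg (by linarith) hI1nonneg
    have h2 : 0 < ((n:ℝ)+5) * (∫ r in Ioi (0:ℝ), r^2*(u r)^2*r^(n+2)) :=
      mul_pos (by positivity) hI2pos
    have h3 : 0 < ω*((n:ℝ)+1) * (∫ r in Ioi (0:ℝ), (u r)^2*r^(n+2)) := by linarith
    by_contra hω
    push_neg at hω
    have h4 : ω*((n:ℝ)+1) < 0 := mul_neg_of_neg_of_pos hω (by positivity)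
    have h5 : ω*((n:ℝ)+1) * (∫ r in Ioi (0:ℝ), (u r)^2*r^(n+2)) ≤ 0 :=
      mul_nonpos_of_nonpos_of_nonneg h4.le hI0nonneg
    linarith
end

section
/- Let d ≥ 3 be an integer and ω ∈ ℝ. Let u, v ∈ C²([0,∞)) solve the radial stationary Schrödinger–Newton–Hooke system −u″ − ((d−1)/r)u′ + r²u + v·u = ω·u and v″ + ((d−1)/r)v′ = u² for r > 0, with u′(0) = v′(0) = 0. Assume u(r) > 0 for all r ≥ 0, that there are C, ε > 0 with |u(r)| + |u′(r)| ≤ C e^{−εr} for all r ≥ 0, and that v(r) → 0 as r → ∞. Then ω ≤ d. -/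
open Set MeasureTheory Filter

lemma C2Ici.hasDerivAt1 {u : ℝ → ℝ} (hu : C2Ici u) {r : ℝ} (hr : 0 < r) :
    HasDerivAt u (dI u r) r := by
  have hm : Set.Ici (0:ℝ) ∈ nhds r := Ici_mem_nhds hr
  have h := ((hu.1 r hr.le).differentiableAt hm).hasDerivAt
  have : dI u r = deriv u r := derivWithin_of_mem_nhds hm
  rwa [this]

lemma C2Ici.hasDerivAt2 {u : ℝ → ℝ} (hu : C2Ici u) {r : ℝ} (hr : 0 < r) :
    HasDerivAt (dI u) (dI (dI u) r) r := by
  have hm : Set.Ici (0:ℝ) ∈ nhds r := Ici_mem_nhds hr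
  have h := ((hu.2.1 r hr.le).differentiableAt hm).hasDerivAt
  have : dI (dI u) r = deriv (dI u) r := derivWithin_of_mem_nhds hm
  rwa [this]

lemma C2Ici.contOn {u : ℝ → ℝ} (hu : C2Ici u) : ContinuousOn u (Set.Ici 0) :=
  fun r hr => (hu.1 r hr).continuousWithinAt

lemma C2Ici.contOn1 {u : ℝ → ℝ} (hu : C2Ici u) : ContinuousOn (dI u) (Set.Ici 0) :=
  fun r hr => (hu.2.1 r hr).continuousWithinAt

/-- Upper bound `ω ≤ d` for the frequency of ground states (positive bound states)
of the radial stationary Schrödinger–Newton–Hooke system. -/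
theorem stmt8 (d : ℕ) (hd : 3 ≤ d) (ω : ℝ) (u v : ℝ → ℝ)
    (hu : C2Ici u) (hv : C2Ici v)
    (hequ : ∀ r : ℝ, 0 < r →
      -dI (dI u) r - ((d:ℝ) - 1) / r * dI u r + r^2 * u r + v r * u r = ω * u r)
    (heqv : ∀ r : ℝ, 0 < r →
      dI (dI v) r + ((d:ℝ) - 1) / r * dI v r = (u r)^2)
    (hu'0 : dI u 0 = 0) (hv'0 : dI v 0 = 0)
    (hupos : ∀ r : ℝ, 0 ≤ r → 0 < u r)
    (C ε : ℝ) (hC : 0 < C) (hε : 0 < ε)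
    (hdecay : ∀ r : ℝ, 0 ≤ r → |u r| + |dI u r| ≤ C * Real.exp (-ε * r))
    (hvlim : Tendsto v atTop (nhds 0)) :
    ω ≤ (d:ℝ) := by
  by_contra hcon
  push_neg at hcon
  have hd1 : (1:ℝ) ≤ (d:ℝ) := by
    have : (1:ℕ) ≤ d := by omega
    exact_mod_cast this
  have hdcast : ((d - 1 : ℕ) : ℝ) = (d:ℝ) - 1 := by
    have : 1 ≤ d := by omega
    push_cast [Nat.cast_sub this]; ring
  have hpow : ∀ r : ℝ, r ^ (d - 1) = r ^ (d - 2) * r := by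
    intro r; rw [← pow_succ]; congr 1; omega
  -- Step 1: v ≤ 0 on [0, ∞)
  -- h r = r^(d-1) * v'(r) is strictly increasing, h 0 = 0, so v' > 0 on (0,∞).
  set h : ℝ → ℝ := fun r => r ^ (d - 1) * dI v r with hh
  have hHderiv : ∀ r : ℝ, 0 < r → HasDerivAt h (r ^ (d - 1) * (u r) ^ 2) r := by
    intro r hr
    have h1 : HasDerivAt (fun r : ℝ => r ^ (d - 1)) (((d - 1 : ℕ) : ℝ) * r ^ (d - 2)) r := by
      simpa [Nat.sub_sub] using hasDerivAt_pow (d - 1) r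
    have h2 := h1.mul (hv.hasDerivAt2 hr)
    have hkey : dI (dI v) r = (u r) ^ 2 - ((d:ℝ) - 1) / r * dI v r := by
      have := heqv r hr; linarith
    refine h2.congr_deriv ?_
    rw [hkey, hdcast, hpow r]
    field_simp
    ring
  have hHcont : ContinuousOn h (Set.Ici 0) :=
    (continuousOn_pow _).mul hv.contOn1
  have hHmono : StrictMonoOn h (Set.Ici 0) := by
    apply strictMonoOn_of_deriv_pos (convex_Ici 0) hHcont
    intro x hx
    rw [interior_Ici] at hx
    rw [(hHderiv x hx).deriv]
    exact mul_pos (pow_pos hx _) (pow_pos (hupos x hx.le) 2)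
  have hH0 : h 0 = 0 := by
    simp [hh, zero_pow (by omega : d - 1 ≠ 0)]
  have hv'pos : ∀ r : ℝ, 0 < r → 0 < dI v r := by
    intro r hr
    have h1 := hHmono (Set.self_mem_Ici) (le_of_lt hr : (0:ℝ) ≤ r) hr
    rw [hH0] at h1
    have hpos : 0 < r ^ (d - 1) * dI v r := by simpa [hh] using h1
    have hrp : 0 < r ^ (d - 1) := pow_pos hr _
    nlinarith
  have hvmono : StrictMonoOn v (Set.Ici 0) := by
    apply strictMonoOn_of_deriv_pos (convex_Ici 0) hv.contOn
    intro x hx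
    rw [interior_Ici] at hx
    rw [(hv.hasDerivAt1 hx).deriv]
    exact hv'pos x hx
  have hvle : ∀ r : ℝ, 0 ≤ r → v r ≤ 0 := by
    intro r hr
    refine ge_of_tendsto hvlim ?_
    filter_upwards [eventually_gt_atTop r] with s hs
    exact le_of_lt (hvmono hr (hr.trans hs.le) hs)
  -- Step 2: the Gaussian Wronskian g r = r^(d-1) * (u' + r u) * exp(-r²/2)
  set E : ℝ → ℝ := fun r => Real.exp (-(r ^ 2) / 2) with hE
  have hEderiv : ∀ r : ℝ, HasDerivAt E (-r * E r) r := by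
    intro r
    have h1 : HasDerivAt (fun r : ℝ => -(r ^ 2) / 2) (-r) r := by
      have := ((hasDerivAt_pow 2 r).neg).div_const 2
      refine this.congr_deriv ?_
      push_cast; ring
    simpa [hE, mul_comm] using h1.exp
  set g : ℝ → ℝ := fun r => r ^ (d - 1) * ((dI u r + r * u r) * E r) with hg
  have hGderiv : ∀ r : ℝ, 0 < r →
      HasDerivAt g (r ^ (d - 1) * E r * u r * (v r - ω + (d:ℝ))) r := by
    intro r hr
    have h1 : HasDerivAt (fun r : ℝ => r ^ (d - 1)) (((d - 1 : ℕ) : ℝ) * r ^ (d - 2)) r := by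
      simpa [Nat.sub_sub] using hasDerivAt_pow (d - 1) r
    have hW : HasDerivAt (fun r => dI u r + r * u r)
        (dI (dI u) r + (1 * u r + r * dI u r)) r :=
      (hu.hasDerivAt2 hr).add ((hasDerivAt_id r).mul (hu.hasDerivAt1 hr))
    have h2 := h1.mul (hW.mul (hEderiv r))
    have hkey : dI (dI u) r = r ^ 2 * u r + v r * u r - ω * u r - ((d:ℝ) - 1) / r * dI u r := by
      have := hequ r hr; linarith
    refine h2.congr_deriv ?_
    rw [hkey, hdcast, hpow r]
    have hEpos : 0 < E r := Real.exp_pos _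
    simp only [Pi.mul_apply]
    field_simp
    ring
  have hGcont : ContinuousOn g (Set.Ici 0) := by
    apply (continuousOn_pow _).mul
    apply ContinuousOn.mul
    · exact hu.contOn1.add (continuousOn_id.mul hu.contOn)
    · exact (Real.continuous_exp.comp (by continuity)).continuousOn
  have hGanti : StrictAntiOn g (Set.Ici 0) := by
    apply strictAntiOn_of_deriv_neg (convex_Ici 0) hGcont
    intro x hx
    rw [interior_Ici] at hx
    rw [(hGderiv x hx).deriv]
    have h1 : 0 < x ^ (d - 1) * E x * u x :=
      mul_pos (mul_pos (pow_pos hx _) (Real.exp_pos _)) (hupos x hx.le)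
    have h2 : v x - ω + (d:ℝ) < 0 := by
      have := hvle x hx.le
      linarith
    exact mul_neg_of_pos_of_neg h1 h2
  have hG0 : g 0 = 0 := by
    simp [hg, zero_pow (by omega : d - 1 ≠ 0)]
  have hG1 : g 1 < 0 := by
    have := hGanti (Set.self_mem_Ici) (by norm_num : (1:ℝ) ∈ Set.Ici (0:ℝ)) one_pos
    rwa [hG0] at this
  -- g tends to 0 at infinity
  have hT : ∀ n : ℕ, Tendsto (fun r : ℝ => r ^ n * Real.exp (-ε * r)) atTop (nhds 0) := by
    intro n
    refine (tendsto_rpow_mul_exp_neg_mul_atTop_nhds_zero (n : ℝ) ε hε).congr' ?_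
    filter_upwards [eventually_ge_atTop (0:ℝ)] with r hr
    rw [Real.rpow_natCast]
  have hGlim : Tendsto g atTop (nhds 0) := by
    apply squeeze_zero_norm'
      (a := fun r => C * (r ^ (d - 1) * Real.exp (-ε * r)) + C * (r ^ d * Real.exp (-ε * r)))
    · filter_upwards [eventually_ge_atTop (0:ℝ)] with r hr
      have hE1 : E r ≤ 1 := by
        rw [hE]
        refine Real.exp_le_one_iff.2 ?_
        have : (0:ℝ) ≤ r ^ 2 := sq_nonneg r
        linarith
      have hEnn : (0:ℝ) ≤ E r := (Real.exp_pos _).le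
      have h1r : (0:ℝ) ≤ 1 + r := by linarith
      have hb1 : |dI u r + r * u r| ≤ (1 + r) * (C * Real.exp (-ε * r)) := by
        have h2 : |dI u r + r * u r| ≤ |dI u r| + r * |u r| := by
          refine (abs_add_le _ _).trans ?_
          rw [abs_mul, abs_of_nonneg hr]
        have h3 : |dI u r| + r * |u r| ≤ (1 + r) * (|u r| + |dI u r|) := by
          have := abs_nonneg (u r); have := abs_nonneg (dI u r)
          nlinarith
        have h4 := mul_le_mul_of_nonneg_left (hdecay r hr) h1r
        linarith
      have hnorm : ‖g r‖ = r ^ (d - 1) * |dI u r + r * u r| * E r := by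
        rw [hg]
        simp only [Real.norm_eq_abs]
        rw [abs_mul, abs_mul, abs_of_nonneg (pow_nonneg hr _), abs_of_nonneg hEnn, mul_assoc]
      rw [hnorm]
      have hstep : r ^ (d - 1) * |dI u r + r * u r| * E r ≤
          r ^ (d - 1) * ((1 + r) * (C * Real.exp (-ε * r))) * 1 := by
        refine mul_le_mul (mul_le_mul_of_nonneg_left hb1 (pow_nonneg hr _)) hE1 hEnn ?_
        exact mul_nonneg (pow_nonneg hr _) (mul_nonneg h1r (by positivity))
      refine hstep.trans (le_of_eq ?_)
      have hpd : r ^ d = r ^ (d - 1) * r := by rw [← pow_succ]; congr 1; omega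
      rw [hpd]; ring
    · have := ((hT (d - 1)).const_mul C).add ((hT d).const_mul C)
      simpa using this
  have : (0:ℝ) ≤ g 1 := by
    refine le_of_tendsto hGlim ?_
    filter_upwards [eventually_ge_atTop (1:ℝ)] with s hs
    rcases eq_or_lt_of_le hs with rfl | hs'
    · exact le_refl _
    · exact le_of_lt (hGanti (by norm_num) (by simp only [Set.mem_Ici]; linarith) hs')
  linarith
end

section
/- Let d ≥ 3 be an integer and ω ∈ ℝ. Let u ∈ C²([0,∞)) solve the radial stationary Gross–Pitaevskii equation −u″ − ((d−1)/r)u′ + r²u − u³ = ω·u for r > 0, with u′(0) = 0, and assume there are C, ε > 0 with |u(r)| + |u′(r)| ≤ C e^{−εr} for all r ≥ 0. Then the Pohozaev identity (d−4)·∫₀^∞ u′(r)² r^{d−1} dr + (d+4)·∫₀^∞ r² u(r)² r^{d−1} dr = ω·d·∫₀^∞ u(r)² r^{d−1} dr holds. In particular, if d ≥ 4 and u is not identically zero, then ω ≥ 0. -/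
open Set MeasureTheory Filter
open Topology

section Aux

lemma aux_pow_le_exp {ε : ℝ} (hε : 0 < ε) (k : ℕ) :
    ∃ B : ℝ, 0 ≤ B ∧ ∀ r : ℝ, 0 ≤ r → r ^ k ≤ B * Real.exp (ε * r) := by
  refine ⟨(k.factorial : ℝ) / ε ^ k, by positivity, fun r hr => ?_⟩
  have h1 : (ε * r) ^ k / (k.factorial : ℝ) ≤ Real.exp (ε * r) := by
    calc (ε * r) ^ k / (k.factorial : ℝ)
        ≤ ∑ i ∈ Finset.range (k + 1), (ε * r) ^ i / (i.factorial : ℝ) := by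
          refine Finset.single_le_sum (f := fun i => (ε * r) ^ i / (i.factorial : ℝ))
            (fun i _ => by positivity) (Finset.self_mem_range_succ k)
      _ ≤ Real.exp (ε * r) := Real.sum_le_exp_of_nonneg (by positivity) _
  have h2 : (ε * r) ^ k ≤ (k.factorial : ℝ) * Real.exp (ε * r) := by
    rw [div_le_iff₀ (by positivity : (0:ℝ) < (k.factorial : ℝ))] at h1
    linarith [h1]
  rw [div_mul_eq_mul_div, le_div_iff₀ (by positivity : (0:ℝ) < ε ^ k)]
  calc r ^ k * ε ^ k = (ε * r) ^ k := by rw [mul_pow]; ring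
    _ ≤ (k.factorial : ℝ) * Real.exp (ε * r) := h2

lemma aux_tendsto_pow_exp {b : ℝ} (hb : 0 < b) (k : ℕ) :
    Tendsto (fun r : ℝ => r ^ k * Real.exp (-b * r)) atTop (𝓝 0) := by
  have h0 : Tendsto (fun y : ℝ => y ^ k * Real.exp (-y)) atTop (𝓝 0) :=
    Real.tendsto_pow_mul_exp_neg_atTop_nhds_zero k
  have h1 : Tendsto (fun r : ℝ => b * r) atTop atTop :=
    Tendsto.const_mul_atTop hb tendsto_id
  have h2 := (h0.comp h1).const_mul ((1 / b) ^ k)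
  simp only [mul_zero] at h2
  refine h2.congr (fun r => ?_)
  simp only [Function.comp]
  rw [mul_pow]
  have hb' : b ≠ 0 := ne_of_gt hb
  field_simp
  ring_nf
  rw [← mul_pow, mul_inv_cancel₀ hb', one_pow, one_mul]

end Aux

set_option maxHeartbeats 2000000 in
/-- Pohozaev identity for the radial stationary Gross–Pitaevskii equation with harmonic
trapping; in critical and supercritical dimensions (`d ≥ 4`) nontrivial bound states
have `ω ≥ 0`. -/
theorem stmt9 (d : ℕ) (hd : 3 ≤ d) (ω : ℝ) (u : ℝ → ℝ)
    (hu : C2Ici u)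
    (hequ : ∀ r : ℝ, 0 < r →
      -dI (dI u) r - ((d:ℝ) - 1) / r * dI u r + r^2 * u r - (u r)^3 = ω * u r)
    (hu'0 : dI u 0 = 0)
    (C ε : ℝ) (hC : 0 < C) (hε : 0 < ε)
    (hdecay : ∀ r : ℝ, 0 ≤ r → |u r| + |dI u r| ≤ C * Real.exp (-ε * r)) :
    ((d:ℝ) - 4) * (∫ r in Ioi (0:ℝ), (dI u r)^2 * r^(d-1))
      + ((d:ℝ) + 4) * (∫ r in Ioi (0:ℝ), r^2 * (u r)^2 * r^(d-1))
      = ω * (d:ℝ) * (∫ r in Ioi (0:ℝ), (u r)^2 * r^(d-1))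
    ∧ (4 ≤ d → (∃ r : ℝ, 0 ≤ r ∧ u r ≠ 0) → 0 ≤ ω) := by
  obtain ⟨m, rfl⟩ : ∃ m, d = m + 3 := ⟨d - 3, by omega⟩
  have hd1 : m + 3 - 1 = m + 2 := by omega
  rw [hd1]
  set v : ℝ → ℝ := dI u with hvdef
  set w : ℝ → ℝ := dI v with hwdef
  -- basic continuity
  have hcu : ContinuousOn u (Ici 0) := fun r hr => (hu.1 r hr).continuousWithinAt
  have hcv : ContinuousOn v (Ici 0) := fun r hr => (hu.2.1 r hr).continuousWithinAt
  -- derivatives at interior points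
  have hud : ∀ r : ℝ, 0 < r → HasDerivAt u (v r) r := by
    intro r hr
    have hn : Ici (0:ℝ) ∈ 𝓝 r := Ici_mem_nhds hr
    have h := (hu.1 r hr.le).differentiableAt hn
    have hv : v r = deriv u r := by rw [hvdef, dI, derivWithin_of_mem_nhds hn]
    rw [hv]
    exact h.hasDerivAt
  have hvd : ∀ r : ℝ, 0 < r → HasDerivAt v (w r) r := by
    intro r hr
    have hn : Ici (0:ℝ) ∈ 𝓝 r := Ici_mem_nhds hr
    have h := (hu.2.1 r hr.le).differentiableAt hn
    have hw : w r = deriv v r := by rw [hwdef, dI, derivWithin_of_mem_nhds hn]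
    rw [hw]
    exact h.hasDerivAt
  -- the ODE solved for w
  have hw : ∀ r : ℝ, 0 < r →
      w r = -(((m:ℝ) + 2) / r) * v r + r ^ 2 * u r - (u r) ^ 3 - ω * u r := by
    intro r hr
    have h := hequ r hr
    push_cast at h
    rw [show ((m:ℝ) + 3 - 1) = (m:ℝ) + 2 by ring] at h
    linarith [h]
  -- decay bounds
  have hub : ∀ r : ℝ, 0 ≤ r → |u r| ≤ C * Real.exp (-ε * r) := fun r hr =>
    le_trans (le_add_of_nonneg_right (abs_nonneg _)) (hdecay r hr)
  have hvb : ∀ r : ℝ, 0 ≤ r → |v r| ≤ C * Real.exp (-ε * r) := fun r hr =>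
    le_trans (le_add_of_nonneg_left (abs_nonneg _)) (hdecay r hr)
  have hexp2 : ∀ r : ℝ, Real.exp (-ε * r) * Real.exp (-ε * r) = Real.exp (-(2 * ε) * r) := by
    intro r; rw [← Real.exp_add]; ring_nf
  have key2 : ∀ r a b : ℝ, |a| ≤ C * Real.exp (-ε * r) → |b| ≤ C * Real.exp (-ε * r) →
      |a * b| ≤ C ^ 2 * Real.exp (-(2 * ε) * r) := by
    intro r a b ha hb
    calc |a * b| = |a| * |b| := abs_mul a b
      _ ≤ (C * Real.exp (-ε * r)) * (C * Real.exp (-ε * r)) :=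
          mul_le_mul ha hb (abs_nonneg _) (by positivity)
      _ = C ^ 2 * Real.exp (-(2 * ε) * r) := by rw [← hexp2 r]; ring
  have hu2b : ∀ r : ℝ, 0 ≤ r → (u r) ^ 2 ≤ C ^ 2 * Real.exp (-(2 * ε) * r) := by
    intro r hr
    have h := key2 r (u r) (u r) (hub r hr) (hub r hr)
    rwa [abs_mul_self, ← pow_two] at h
  have hv2b : ∀ r : ℝ, 0 ≤ r → (v r) ^ 2 ≤ C ^ 2 * Real.exp (-(2 * ε) * r) := by
    intro r hr
    have h := key2 r (v r) (v r) (hvb r hr) (hvb r hr)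
    rwa [abs_mul_self, ← pow_two] at h
  have huvb : ∀ r : ℝ, 0 ≤ r → |u r * v r| ≤ C ^ 2 * Real.exp (-(2 * ε) * r) :=
    fun r hr => key2 r (u r) (v r) (hub r hr) (hvb r hr)
  have hexpone : ∀ r : ℝ, 0 ≤ r → Real.exp (-(2 * ε) * r) ≤ 1 := by
    intro r hr
    rw [show (1:ℝ) = Real.exp 0 by simp]
    exact Real.exp_le_exp.mpr (by nlinarith)
  have hu4b : ∀ r : ℝ, 0 ≤ r → (u r) ^ 4 ≤ C ^ 4 * Real.exp (-(2 * ε) * r) := by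
    intro r hr
    have h2 := hu2b r hr
    have he1 := hexpone r hr
    have hE0 := Real.exp_pos (-(2 * ε) * r)
    nlinarith [sq_nonneg (u r), pow_le_pow_left₀ (sq_nonneg (u r)) h2 2,
      mul_nonneg (pow_nonneg hC.le 4) hE0.le, sq_nonneg C]
  -- measurability
  have hcuI : ContinuousOn u (Ioi 0) := hcu.mono Ioi_subset_Ici_self
  have hcvI : ContinuousOn v (Ioi 0) := hcv.mono Ioi_subset_Ici_self
  have hmF1 : AEStronglyMeasurable (fun r : ℝ => (v r) ^ 2 * r ^ (m + 2))
      (volume.restrict (Ioi 0)) :=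
    ((hcvI.pow 2).mul (continuousOn_pow (m + 2))).aestronglyMeasurable measurableSet_Ioi
  have hmF2 : AEStronglyMeasurable (fun r : ℝ => r ^ 2 * (u r) ^ 2 * r ^ (m + 2))
      (volume.restrict (Ioi 0)) :=
    (((continuousOn_pow 2).mul (hcuI.pow 2)).mul
      (continuousOn_pow (m + 2))).aestronglyMeasurable measurableSet_Ioi
  have hmF3 : AEStronglyMeasurable (fun r : ℝ => (u r) ^ 2 * r ^ (m + 2))
      (volume.restrict (Ioi 0)) :=
    ((hcuI.pow 2).mul (continuousOn_pow (m + 2))).aestronglyMeasurable measurableSet_Ioi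
  -- integrability from exponential bounds
  have int_of_bound : ∀ (f : ℝ → ℝ) (A : ℝ),
      AEStronglyMeasurable f (volume.restrict (Ioi 0)) →
      (∀ r : ℝ, r ∈ Ioi (0:ℝ) → ‖f r‖ ≤ A * Real.exp (-ε * r)) →
      IntegrableOn f (Ioi 0) := by
    intro f A hm hb
    refine Integrable.mono' ((exp_neg_integrableOn_Ioi 0 hε).const_mul A) hm ?_
    filter_upwards [ae_restrict_mem measurableSet_Ioi] with r hr using hb r hr
  obtain ⟨B2, hB20, hB2⟩ := aux_pow_le_exp hε (m + 2)
  obtain ⟨B4, hB40, hB4⟩ := aux_pow_le_exp hε (m + 4)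
  have habs2 : ∀ r : ℝ, 0 ≤ r →
      r ^ (m + 2) * Real.exp (-(2 * ε) * r) ≤ B2 * Real.exp (-ε * r) := by
    intro r hr
    calc r ^ (m + 2) * Real.exp (-(2 * ε) * r)
        ≤ (B2 * Real.exp (ε * r)) * Real.exp (-(2 * ε) * r) :=
          mul_le_mul_of_nonneg_right (hB2 r hr) (Real.exp_pos _).le
      _ = B2 * Real.exp (-ε * r) := by
          rw [mul_assoc, ← Real.exp_add]; ring_nf
  have habs4 : ∀ r : ℝ, 0 ≤ r →
      r ^ (m + 4) * Real.exp (-(2 * ε) * r) ≤ B4 * Real.exp (-ε * r) := by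
    intro r hr
    calc r ^ (m + 4) * Real.exp (-(2 * ε) * r)
        ≤ (B4 * Real.exp (ε * r)) * Real.exp (-(2 * ε) * r) :=
          mul_le_mul_of_nonneg_right (hB4 r hr) (Real.exp_pos _).le
      _ = B4 * Real.exp (-ε * r) := by
          rw [mul_assoc, ← Real.exp_add]; ring_nf
  have hiF1 : IntegrableOn (fun r : ℝ => (v r) ^ 2 * r ^ (m + 2)) (Ioi 0) := by
    refine int_of_bound _ (C ^ 2 * B2) hmF1 (fun r hr => ?_)
    have hr0 : (0:ℝ) ≤ r := le_of_lt hr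
    have hnn : (0:ℝ) ≤ (v r) ^ 2 * r ^ (m + 2) :=
      mul_nonneg (sq_nonneg _) (pow_nonneg hr0 _)
    calc ‖(v r) ^ 2 * r ^ (m + 2)‖ = (v r) ^ 2 * r ^ (m + 2) := abs_of_nonneg hnn
      _ ≤ (C ^ 2 * Real.exp (-(2 * ε) * r)) * r ^ (m + 2) :=
          mul_le_mul_of_nonneg_right (hv2b r hr0) (pow_nonneg hr0 _)
      _ = C ^ 2 * (r ^ (m + 2) * Real.exp (-(2 * ε) * r)) := by ring
      _ ≤ C ^ 2 * (B2 * Real.exp (-ε * r)) :=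
          mul_le_mul_of_nonneg_left (habs2 r hr0) (by positivity)
      _ = (C ^ 2 * B2) * Real.exp (-ε * r) := by ring
  have hiF2 : IntegrableOn (fun r : ℝ => r ^ 2 * (u r) ^ 2 * r ^ (m + 2)) (Ioi 0) := by
    refine int_of_bound _ (C ^ 2 * B4) hmF2 (fun r hr => ?_)
    have hr0 : (0:ℝ) ≤ r := le_of_lt hr
    have hnn : (0:ℝ) ≤ r ^ 2 * (u r) ^ 2 * r ^ (m + 2) :=
      mul_nonneg (mul_nonneg (pow_nonneg hr0 _) (sq_nonneg _)) (pow_nonneg hr0 _)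
    calc ‖r ^ 2 * (u r) ^ 2 * r ^ (m + 2)‖ = r ^ 2 * (u r) ^ 2 * r ^ (m + 2) :=
          abs_of_nonneg hnn
      _ = (u r) ^ 2 * r ^ (m + 4) := by ring
      _ ≤ (C ^ 2 * Real.exp (-(2 * ε) * r)) * r ^ (m + 4) :=
          mul_le_mul_of_nonneg_right (hu2b r hr0) (pow_nonneg hr0 _)
      _ = C ^ 2 * (r ^ (m + 4) * Real.exp (-(2 * ε) * r)) := by ring
      _ ≤ C ^ 2 * (B4 * Real.exp (-ε * r)) :=
          mul_le_mul_of_nonneg_left (habs4 r hr0) (by positivity)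
      _ = (C ^ 2 * B4) * Real.exp (-ε * r) := by ring
  have hiF3 : IntegrableOn (fun r : ℝ => (u r) ^ 2 * r ^ (m + 2)) (Ioi 0) := by
    refine int_of_bound _ (C ^ 2 * B2) hmF3 (fun r hr => ?_)
    have hr0 : (0:ℝ) ≤ r := le_of_lt hr
    have hnn : (0:ℝ) ≤ (u r) ^ 2 * r ^ (m + 2) :=
      mul_nonneg (sq_nonneg _) (pow_nonneg hr0 _)
    calc ‖(u r) ^ 2 * r ^ (m + 2)‖ = (u r) ^ 2 * r ^ (m + 2) := abs_of_nonneg hnn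
      _ ≤ (C ^ 2 * Real.exp (-(2 * ε) * r)) * r ^ (m + 2) :=
          mul_le_mul_of_nonneg_right (hu2b r hr0) (pow_nonneg hr0 _)
      _ = C ^ 2 * (r ^ (m + 2) * Real.exp (-(2 * ε) * r)) := by ring
      _ ≤ C ^ 2 * (B2 * Real.exp (-ε * r)) :=
          mul_le_mul_of_nonneg_left (habs2 r hr0) (by positivity)
      _ = (C ^ 2 * B2) * Real.exp (-ε * r) := by ring
  -- G has derivative g on (0,∞)
  have hGderiv : ∀ r ∈ Ioi (0:ℝ), HasDerivAt
      (fun x : ℝ => x ^ (m + 3) * ((v x) ^ 2 / 2) - x ^ (m + 5) * ((u x) ^ 2 / 2)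
        + x ^ (m + 3) * ((u x) ^ 4 / 4) + x ^ (m + 3) * (ω * (u x) ^ 2 / 2)
        + x ^ (m + 2) * (((m:ℝ) + 3) / 4 * (u x * v x)))
      ((-((m:ℝ) - 1) / 4) * ((v r) ^ 2 * r ^ (m + 2))
        + (-((m:ℝ) + 7) / 4) * (r ^ 2 * (u r) ^ 2 * r ^ (m + 2))
        + (ω * ((m:ℝ) + 3) / 4) * ((u r) ^ 2 * r ^ (m + 2))) r := by
    intro r hr
    have hr' : (0:ℝ) < r := hr
    have hP2 : HasDerivAt (fun x : ℝ => x ^ (m + 2)) (((m:ℝ) + 2) * r ^ (m + 1)) r := by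
      have := hasDerivAt_pow (m + 2) r
      norm_num at this
      convert this using 2 <;> push_cast <;> ring
    have hP3 : HasDerivAt (fun x : ℝ => x ^ (m + 3)) (((m:ℝ) + 3) * r ^ (m + 2)) r := by
      have := hasDerivAt_pow (m + 3) r
      norm_num at this
      convert this using 2 <;> push_cast <;> ring
    have hP5 : HasDerivAt (fun x : ℝ => x ^ (m + 5)) (((m:ℝ) + 5) * r ^ (m + 4)) r := by
      have := hasDerivAt_pow (m + 5) r
      norm_num at this
      convert this using 2 <;> push_cast <;> ring
    have hu' := hud r hr'
    have hv' := hvd r hr'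
    have hu2 : HasDerivAt (fun x => (u x) ^ 2) (2 * u r * v r) r := by
      simpa using hu'.fun_pow 2
    have hu4 : HasDerivAt (fun x => (u x) ^ 4) (4 * (u r) ^ 3 * v r) r := by
      simpa using hu'.fun_pow 4
    have hv2 : HasDerivAt (fun x => (v x) ^ 2) (2 * v r * w r) r := by
      simpa using hv'.fun_pow 2
    have hT1 := hP3.fun_mul (hv2.div_const 2)
    have hT2 := hP5.fun_mul (hu2.div_const 2)
    have hT3 := hP3.fun_mul (hu4.div_const 4)
    have hT4 := hP3.fun_mul ((hu2.const_mul ω).div_const 2)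
    have hT5 := hP2.fun_mul ((hu'.fun_mul hv').const_mul (((m:ℝ) + 3) / 4))
    have hG := (((hT1.fun_sub hT2).fun_add hT3).fun_add hT4).fun_add hT5
    refine hG.congr_deriv ?_
    rw [hw r hr']
    have hrne : r ≠ 0 := ne_of_gt hr'
    field_simp
    ring
  -- G at 0 and right-continuity at 0
  have hG0 : (fun x : ℝ => x ^ (m + 3) * ((v x) ^ 2 / 2) - x ^ (m + 5) * ((u x) ^ 2 / 2)
        + x ^ (m + 3) * ((u x) ^ 4 / 4) + x ^ (m + 3) * (ω * (u x) ^ 2 / 2)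
        + x ^ (m + 2) * (((m:ℝ) + 3) / 4 * (u x * v x))) 0 = 0 := by
    norm_num
  have hGcont : ContinuousWithinAt
      (fun x : ℝ => x ^ (m + 3) * ((v x) ^ 2 / 2) - x ^ (m + 5) * ((u x) ^ 2 / 2)
        + x ^ (m + 3) * ((u x) ^ 4 / 4) + x ^ (m + 3) * (ω * (u x) ^ 2 / 2)
        + x ^ (m + 2) * (((m:ℝ) + 3) / 4 * (u x * v x))) (Ici 0) 0 := by
    have h0 : (0:ℝ) ∈ Ici (0:ℝ) := self_mem_Ici
    have hcu0 := hcu 0 h0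
    have hcv0 := hcv 0 h0
    exact ((continuous_pow (m+3)).continuousWithinAt.mul ((hcv0.pow 2).div_const 2) |>.sub
      ((continuous_pow (m+5)).continuousWithinAt.mul ((hcu0.pow 2).div_const 2)) |>.add
      ((continuous_pow (m+3)).continuousWithinAt.mul ((hcu0.pow 4).div_const 4)) |>.add
      ((continuous_pow (m+3)).continuousWithinAt.mul (((hcu0.pow 2).const_mul ω).div_const 2)) |>.add
      ((continuous_pow (m+2)).continuousWithinAt.mul ((hcu0.mul hcv0).const_mul _)))
  -- G tends to 0 at infinity
  have tendsto_piece : ∀ (k : ℕ) (f : ℝ → ℝ) (A : ℝ),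
      (∀ r : ℝ, 0 ≤ r → |f r| ≤ A * Real.exp (-(2 * ε) * r)) →
      Tendsto (fun r => r ^ k * f r) atTop (𝓝 0) := by
    intro k f A hf
    have h2e : (0:ℝ) < 2 * ε := by positivity
    have ht := (aux_tendsto_pow_exp h2e k).const_mul A
    rw [mul_zero] at ht
    refine squeeze_zero_norm' ?_ ht
    filter_upwards [eventually_ge_atTop (0:ℝ)] with r hr
    have h1 := hf r hr
    calc ‖r ^ k * f r‖ = r ^ k * |f r| := by
          rw [norm_mul, Real.norm_eq_abs, Real.norm_eq_abs, abs_pow, abs_of_nonneg hr]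
      _ ≤ r ^ k * (A * Real.exp (-(2 * ε) * r)) :=
          mul_le_mul_of_nonneg_left h1 (pow_nonneg hr k)
      _ = A * (r ^ k * Real.exp (-(2 * ε) * r)) := by ring
  have hGtop : Tendsto
      (fun x : ℝ => x ^ (m + 3) * ((v x) ^ 2 / 2) - x ^ (m + 5) * ((u x) ^ 2 / 2)
        + x ^ (m + 3) * ((u x) ^ 4 / 4) + x ^ (m + 3) * (ω * (u x) ^ 2 / 2)
        + x ^ (m + 2) * (((m:ℝ) + 3) / 4 * (u x * v x))) atTop (𝓝 0) := by
    have t1 : Tendsto (fun r : ℝ => r ^ (m + 3) * ((v r) ^ 2 / 2)) atTop (𝓝 0) := by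
      refine tendsto_piece (m + 3) _ (C ^ 2) (fun r hr => ?_)
      rw [abs_of_nonneg (by positivity : (0:ℝ) ≤ (v r) ^ 2 / 2)]
      linarith [hv2b r hr, sq_nonneg (v r)]
    have t2 : Tendsto (fun r : ℝ => r ^ (m + 5) * ((u r) ^ 2 / 2)) atTop (𝓝 0) := by
      refine tendsto_piece (m + 5) _ (C ^ 2) (fun r hr => ?_)
      rw [abs_of_nonneg (by positivity : (0:ℝ) ≤ (u r) ^ 2 / 2)]
      linarith [hu2b r hr, sq_nonneg (u r)]
    have t3 : Tendsto (fun r : ℝ => r ^ (m + 3) * ((u r) ^ 4 / 4)) atTop (𝓝 0) := by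
      refine tendsto_piece (m + 3) _ (C ^ 4) (fun r hr => ?_)
      rw [abs_of_nonneg (by positivity : (0:ℝ) ≤ (u r) ^ 4 / 4)]
      nlinarith [hu4b r hr, pow_nonneg (sq_nonneg (u r)) 2]
    have t4 : Tendsto (fun r : ℝ => r ^ (m + 3) * (ω * (u r) ^ 2 / 2)) atTop (𝓝 0) := by
      refine tendsto_piece (m + 3) _ (|ω| * C ^ 2) (fun r hr => ?_)
      have h := hu2b r hr
      have habs : |ω * (u r) ^ 2 / 2| = |ω| * ((u r) ^ 2) / 2 := by
        rw [abs_div, abs_mul, abs_of_nonneg (sq_nonneg (u r))]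
        norm_num
      rw [habs]
      nlinarith [mul_le_mul_of_nonneg_left h (abs_nonneg ω),
        mul_nonneg (abs_nonneg ω) (sq_nonneg (u r))]
    have t5 : Tendsto (fun r : ℝ => r ^ (m + 2) * (((m:ℝ) + 3) / 4 * (u r * v r)))
        atTop (𝓝 0) := by
      refine tendsto_piece (m + 2) _ (((m:ℝ) + 3) * C ^ 2) (fun r hr => ?_)
      have h := huvb r hr
      have hm3 : (0:ℝ) ≤ ((m:ℝ) + 3) / 4 := by positivity
      rw [abs_mul, abs_of_nonneg hm3]
      nlinarith [mul_le_mul_of_nonneg_left h hm3, abs_nonneg (u r * v r)]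
    have := (((t1.sub t2).add t3).add t4).add t5
    simpa using this
  -- FTC on (0, ∞)
  have hFTC := integral_Ioi_of_hasDerivAt_of_tendsto
      (f' := fun r : ℝ => (-((m:ℝ) - 1) / 4) * ((v r) ^ 2 * r ^ (m + 2))
        + (-((m:ℝ) + 7) / 4) * (r ^ 2 * (u r) ^ 2 * r ^ (m + 2))
        + (ω * ((m:ℝ) + 3) / 4) * ((u r) ^ 2 * r ^ (m + 2)))
      hGcont hGderiv
      (((hiF1.const_mul _).add (hiF2.const_mul _)).add (hiF3.const_mul _)) hGtop
  have hG0' : (0:ℝ) ^ (m + 3) * (v 0 ^ 2 / 2) - (0:ℝ) ^ (m + 5) * (u 0 ^ 2 / 2)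
      + (0:ℝ) ^ (m + 3) * (u 0 ^ 4 / 4) + (0:ℝ) ^ (m + 3) * (ω * u 0 ^ 2 / 2)
      + (0:ℝ) ^ (m + 2) * (((m:ℝ) + 3) / 4 * (u 0 * v 0)) = 0 := by
    rw [show (0:ℝ) ^ (m+3) = 0 from zero_pow (by omega),
      show (0:ℝ) ^ (m+5) = 0 from zero_pow (by omega),
      show (0:ℝ) ^ (m+2) = 0 from zero_pow (by omega)]
    ring
  rw [hG0', sub_zero] at hFTC
  -- split the integral
  have hsplit : (∫ r in Ioi (0:ℝ), ((-((m:ℝ) - 1) / 4) * ((v r) ^ 2 * r ^ (m + 2))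
        + (-((m:ℝ) + 7) / 4) * (r ^ 2 * (u r) ^ 2 * r ^ (m + 2))
        + (ω * ((m:ℝ) + 3) / 4) * ((u r) ^ 2 * r ^ (m + 2))))
      = (-((m:ℝ) - 1) / 4) * (∫ r in Ioi (0:ℝ), (v r) ^ 2 * r ^ (m + 2))
        + (-((m:ℝ) + 7) / 4) * (∫ r in Ioi (0:ℝ), r ^ 2 * (u r) ^ 2 * r ^ (m + 2))
        + (ω * ((m:ℝ) + 3) / 4) * (∫ r in Ioi (0:ℝ), (u r) ^ 2 * r ^ (m + 2)) := by
    have e1 := integral_add (μ := volume.restrict (Ioi 0))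
      ((hiF1.const_mul (-((m:ℝ) - 1) / 4)).add (hiF2.const_mul (-((m:ℝ) + 7) / 4)))
      (hiF3.const_mul (ω * ((m:ℝ) + 3) / 4))
    simp only [Pi.add_apply] at e1
    have e2 := integral_add (μ := volume.restrict (Ioi 0))
      (hiF1.const_mul (-((m:ℝ) - 1) / 4)) (hiF2.const_mul (-((m:ℝ) + 7) / 4))
    rw [e1, e2, integral_const_mul, integral_const_mul, integral_const_mul]
  rw [hsplit] at hFTC
  have hmain : ((m:ℝ) + 3 - 4) * (∫ r in Ioi (0:ℝ), (v r) ^ 2 * r ^ (m + 2))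
      + ((m:ℝ) + 3 + 4) * (∫ r in Ioi (0:ℝ), r ^ 2 * (u r) ^ 2 * r ^ (m + 2))
      = ω * ((m:ℝ) + 3) * (∫ r in Ioi (0:ℝ), (u r) ^ 2 * r ^ (m + 2)) := by
    linarith [hFTC]
  constructor
  · push_cast
    convert hmain using 2 <;> push_cast <;> ring
  · rintro hd4 ⟨r0, hr00, hru⟩
    have hI1n : 0 ≤ ∫ r in Ioi (0:ℝ), (v r) ^ 2 * r ^ (m + 2) :=
      setIntegral_nonneg measurableSet_Ioi
        (fun r hr => mul_nonneg (sq_nonneg _) (pow_nonneg (le_of_lt hr) _))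
    have hI2n : 0 ≤ ∫ r in Ioi (0:ℝ), r ^ 2 * (u r) ^ 2 * r ^ (m + 2) :=
      setIntegral_nonneg measurableSet_Ioi
        (fun r hr => mul_nonneg (mul_nonneg (pow_nonneg (le_of_lt hr) _) (sq_nonneg _))
          (pow_nonneg (le_of_lt hr) _))
    -- find a point r1 > 0 where u is nonzero
    have hr1 : ∃ r1 : ℝ, 0 < r1 ∧ u r1 ≠ 0 := by
      rcases lt_or_eq_of_le hr00 with h | h
      · exact ⟨r0, h, hru⟩
      · rw [← h] at hru
        have hcu0 : ContinuousWithinAt u (Ici 0) 0 := hcu 0 self_mem_Ici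
        have hne : ∀ᶠ x in 𝓝[Ici (0:ℝ)] 0, u x ≠ 0 :=
          hcu0.eventually (eventually_ne_nhds hru)
        have hmono : 𝓝[Ioi (0:ℝ)] 0 ≤ 𝓝[Ici (0:ℝ)] 0 :=
          nhdsWithin_mono _ Ioi_subset_Ici_self
        have hev : ∀ᶠ x in 𝓝[Ioi (0:ℝ)] 0, u x ≠ 0 ∧ x ∈ Ioi (0:ℝ) :=
          (hne.filter_mono hmono).and eventually_mem_nhdsWithin
        obtain ⟨r1, h1, h2⟩ := hev.exists
        exact ⟨r1, h2, h1⟩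
    obtain ⟨r1, hr1p, hr1ne⟩ := hr1
    have hca : ContinuousAt u r1 :=
      ((hu.1 r1 hr1p.le).differentiableAt (Ici_mem_nhds hr1p)).continuousAt
    have hpre : u ⁻¹' ({0}ᶜ) ∈ 𝓝 r1 :=
      hca.preimage_mem_nhds (isOpen_compl_singleton.mem_nhds (by simpa using hr1ne))
    obtain ⟨δ, hδ, hball⟩ := Metric.mem_nhds_iff.mp hpre
    set a : ℝ := max (r1 - δ/2) (r1/2) with hadef
    set b : ℝ := r1 + δ/2 with hbdef
    have hab : a < b := by
      apply max_lt <;> [linarith; linarith]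
    have hsub : Ioo a b ⊆ Function.support (fun r : ℝ => (u r) ^ 2 * r ^ (m + 2)) ∩ Ioi 0 := by
      intro x hx
      have hxpos : 0 < x :=
        lt_trans (half_pos hr1p) (lt_of_le_of_lt (le_max_right _ _) hx.1)
      have hxb : dist x r1 < δ := by
        rw [Real.dist_eq, abs_lt]
        have h1 : x < r1 + δ/2 := hx.2
        have h2 : r1 - δ/2 < x := lt_of_le_of_lt (le_max_left _ _) hx.1
        constructor <;> linarith
      have hux : u x ≠ 0 := by
        have := hball (Metric.mem_ball.mpr hxb)
        simpa using this
      constructor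
      · simp only [Function.mem_support]
        exact mul_ne_zero (pow_ne_zero _ hux) (pow_ne_zero _ (ne_of_gt hxpos))
      · exact hxpos
    have hI3pos : 0 < ∫ r in Ioi (0:ℝ), (u r) ^ 2 * r ^ (m + 2) := by
      refine (setIntegral_pos_iff_support_of_nonneg_ae ?_ hiF3).mpr ?_
      · filter_upwards [ae_restrict_mem measurableSet_Ioi] with r hr
        exact mul_nonneg (sq_nonneg _) (pow_nonneg (le_of_lt hr) _)
      · refine lt_of_lt_of_le ?_ (measure_mono hsub)
        rw [Real.volume_Ioo]
        exact ENNReal.ofReal_pos.mpr (by linarith)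
    have hm1 : (1:ℝ) ≤ (m:ℝ) := by exact_mod_cast (by omega : 1 ≤ m)
    by_contra hneg
    push_neg at hneg
    nlinarith [hmain, hI1n, hI2n, hI3pos,
      mul_pos (show (0:ℝ) < (m:ℝ) + 3 by positivity) hI3pos]
end

section
/- Let d ≥ 6 be an integer, b > 0, and R₀ ∈ (0,∞]. Suppose u, h ∈ C²([0,R₀)) solve the SNH shooting system in dimension d on (0,R₀) with initial conditions u(0) = b, h(0) = 0, u′(0) = h′(0) = 0. Then u(r) > 0 for every r ∈ [0,R₀). -/
open Set
open scoped ENNReal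

/-- The interval `[0, R)` (with `R` possibly infinite) as a subset of `ℝ`. -/
def SIco (R : ℝ≥0∞) : Set ℝ := {r : ℝ | 0 ≤ r ∧ ENNReal.ofReal r < R}

/-- One-sided derivative on `[0, R)`. -/
noncomputable def dS (R : ℝ≥0∞) (u : ℝ → ℝ) : ℝ → ℝ := derivWithin u (SIco R)

/-- `u` is of class `C²` on `[0, R)` (with one-sided derivatives at `0`). -/
def C2OnS (R : ℝ≥0∞) (u : ℝ → ℝ) : Prop :=
  (∀ r ∈ SIco R, DifferentiableWithinAt ℝ u (SIco R) r) ∧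
  (∀ r ∈ SIco R, DifferentiableWithinAt ℝ (dS R u) (SIco R) r) ∧
  ContinuousOn (dS R (dS R u)) (SIco R)

/-- In critical and supercritical dimensions `d ≥ 6`, the solution of the SNH shooting
system `u'' + ((d-1)/r)u' - r²u + hu = 0`, `h'' + ((d-1)/r)h' + u² = 0` with
`u(0) = b > 0`, `h(0) = 0`, `u'(0) = h'(0) = 0` stays positive on its domain `[0, R₀)`. -/
theorem stmt11 (d : ℕ) (hd : 6 ≤ d) (b : ℝ) (hb : 0 < b)
    (R₀ : ℝ≥0∞) (hR₀ : 0 < R₀)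
    (u h : ℝ → ℝ) (hu : C2OnS R₀ u) (hh : C2OnS R₀ h)
    (hequ : ∀ r : ℝ, 0 < r → ENNReal.ofReal r < R₀ →
      dS R₀ (dS R₀ u) r + ((d:ℝ) - 1) / r * dS R₀ u r - r^2 * u r + h r * u r = 0)
    (heqh : ∀ r : ℝ, 0 < r → ENNReal.ofReal r < R₀ →
      dS R₀ (dS R₀ h) r + ((d:ℝ) - 1) / r * dS R₀ h r + (u r)^2 = 0)
    (hu0 : u 0 = b) (hh0 : h 0 = 0)
    (hu'0 : dS R₀ u 0 = 0) (hh'0 : dS R₀ h 0 = 0) :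
    ∀ r ∈ SIco R₀, 0 < u r := by
  -- basic facts about S := SIco R₀
  have hIccS : ∀ {r₁ : ℝ}, r₁ ∈ SIco R₀ → Icc (0:ℝ) r₁ ⊆ SIco R₀ := by
    intro r₁ hr₁ x hx
    exact ⟨hx.1, lt_of_le_of_lt (ENNReal.ofReal_le_ofReal hx.2) hr₁.2⟩
  have hnhds : ∀ {r : ℝ}, 0 < r → ENNReal.ofReal r < R₀ → SIco R₀ ∈ nhds r := by
    intro r hr hrR
    have hopen : IsOpen (Ioi (0:ℝ) ∩ ENNReal.ofReal ⁻¹' (Iio R₀)) :=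
      isOpen_Ioi.inter (isOpen_Iio.preimage ENNReal.continuous_ofReal)
    exact Filter.mem_of_superset (hopen.mem_nhds ⟨hr, hrR⟩)
      (fun x hx => ⟨le_of_lt hx.1, hx.2⟩)
  have hder : ∀ {f : ℝ → ℝ}, (∀ r ∈ SIco R₀, DifferentiableWithinAt ℝ f (SIco R₀) r) →
      ∀ {r : ℝ}, 0 < r → ENNReal.ofReal r < R₀ → HasDerivAt f (dS R₀ f r) r := by
    intro f hf r hr hrR
    exact ((hf r ⟨hr.le, hrR⟩).hasDerivWithinAt).hasDerivAt (hnhds hr hrR)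
  -- main argument
  intro r hrS
  by_contra hle
  push_neg at hle
  -- the set of nonpositivity points up to r
  set K : Set ℝ := {x ∈ Icc (0:ℝ) r | u x ≤ 0} with hK
  have hcontu : ContinuousOn u (SIco R₀) := fun x hx => (hu.1 x hx).continuousWithinAt
  have hKcl : IsClosed K :=
    (hcontu.mono (hIccS hrS)).preimage_isClosed_of_isClosed isClosed_Icc isClosed_Iic
  have hKne : K.Nonempty := ⟨r, ⟨hrS.1, le_refl r⟩, hle⟩
  have hKbdd : BddBelow K := ⟨0, fun x hx => hx.1.1⟩
  set R := sInf K with hRdef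
  have hRK : R ∈ K := hKcl.csInf_mem hKne hKbdd
  have hR0 : 0 < R := by
    rcases lt_or_eq_of_le hRK.1.1 with h' | h'
    · exact h'
    · exfalso; have := hRK.2; rw [← h', hu0] at this; linarith
  have hRS : R ∈ SIco R₀ := hIccS hrS hRK.1
  have hIccRS : Icc (0:ℝ) R ⊆ SIco R₀ := hIccS hRS
  have hIooS : ∀ {x : ℝ}, x ∈ Ioo (0:ℝ) R → 0 < x ∧ ENNReal.ofReal x < R₀ := by
    intro x hx
    exact ⟨hx.1, (hIccRS ⟨hx.1.le, hx.2.le⟩).2⟩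
  -- u > 0 on [0, R)
  have hupos : ∀ x ∈ Ico (0:ℝ) R, 0 < u x := by
    intro x hx
    by_contra hne
    push_neg at hne
    have : x ∈ K := ⟨⟨hx.1, hx.2.le.trans hRK.1.2⟩, hne⟩
    exact absurd (csInf_le hKbdd this) (not_le.2 hx.2)
  -- Step A : G := x^(d-1) * h' is antitone on [0,R]
  set G : ℝ → ℝ := fun x => x^(d-1) * dS R₀ h x with hGdef
  have hGderiv : ∀ x ∈ Ioo (0:ℝ) R,
      HasDerivAt G (-(x^(d-1) * (u x)^2)) x := by
    intro x hx
    obtain ⟨hx0, hxR⟩ := hIooS hx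
    have h1 := (hasDerivAt_pow (d-1) x).mul (hder hh.2.1 hx0 hxR)
    convert h1 using 1
    case e'_4 => rfl
    case e'_5 => rfl
    case e'_8 => rfl
    have heq := heqh x hx0 hxR
    have hd2 : d - 1 - 1 = d - 2 := by omega
    have hc : ((d-1:ℕ):ℝ) = (d:ℝ) - 1 := by
      have : (1:ℕ) ≤ d := by omega
      push_cast [Nat.cast_sub this]; ring
    have hxp : x^(d-1) = x * x^(d-2) := by
      rw [← pow_succ']; congr 1; omega
    rw [hd2, hc, hxp]
    have hx0' : x ≠ 0 := ne_of_gt hx0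
    field_simp at heq
    linear_combination (-(x^(d-2))) * heq
  have hconth' : ContinuousOn (dS R₀ h) (SIco R₀) :=
    fun x hx => (hh.2.1 x hx).continuousWithinAt
  have hGcont : ContinuousOn G (Icc 0 R) := by
    exact ContinuousOn.mul (continuousOn_pow _) (hconth'.mono hIccRS)
  have hGanti : AntitoneOn G (Icc 0 R) := by
    apply antitoneOn_of_deriv_nonpos (convex_Icc 0 R) hGcont
    · intro x hx
      rw [interior_Icc] at hx
      exact ((hGderiv x hx).differentiableAt.differentiableWithinAt)
    · intro x hx
      rw [interior_Icc] at hx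
      rw [(hGderiv x hx).deriv]
      have : (0:ℝ) ≤ x^(d-1) * (u x)^2 :=
        mul_nonneg (pow_nonneg hx.1.le _) (sq_nonneg _)
      linarith
  have hG0 : G 0 = 0 := by
    simp only [hGdef]
    rw [zero_pow (by omega : d - 1 ≠ 0)]
    ring
  have hh'le : ∀ x ∈ Ioo (0:ℝ) R, dS R₀ h x ≤ 0 := by
    intro x hx
    have hGle : G x ≤ 0 := by
      rw [← hG0]
      exact hGanti (left_mem_Icc.2 hR0.le) ⟨hx.1.le, hx.2.le⟩ hx.1.le
    simp only [hGdef] at hGle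
    have hp : 0 < x^(d-1) := pow_pos hx.1 _
    nlinarith [hGle, hp]
  -- h ≤ 0 on [0,R]
  have hhanti : AntitoneOn h (Icc 0 R) := by
    have hconth : ContinuousOn h (SIco R₀) := fun x hx => (hh.1 x hx).continuousWithinAt
    apply antitoneOn_of_deriv_nonpos (convex_Icc 0 R) (hconth.mono hIccRS)
    · intro x hx
      rw [interior_Icc] at hx
      obtain ⟨hx0, hxR⟩ := hIooS hx
      exact (hder hh.1 hx0 hxR).differentiableAt.differentiableWithinAt
    · intro x hx
      rw [interior_Icc] at hx
      obtain ⟨hx0, hxR⟩ := hIooS hx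
      rw [(hder hh.1 hx0 hxR).deriv]
      exact hh'le x hx
  have hhle : ∀ x ∈ Icc (0:ℝ) R, h x ≤ 0 := by
    intro x hx
    have := hhanti (left_mem_Icc.2 hR0.le) hx hx.1
    rwa [hh0] at this
  -- Step B : F := x^(d-1) * u' is monotone on [0,R]
  set F : ℝ → ℝ := fun x => x^(d-1) * dS R₀ u x with hFdef
  have hFderiv : ∀ x ∈ Ioo (0:ℝ) R,
      HasDerivAt F (x^(d-1) * ((x^2 - h x) * u x)) x := by
    intro x hx
    obtain ⟨hx0, hxR⟩ := hIooS hx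
    have h1 := (hasDerivAt_pow (d-1) x).mul (hder hu.2.1 hx0 hxR)
    convert h1 using 1
    case e'_4 => rfl
    case e'_5 => rfl
    case e'_8 => rfl
    have heq := hequ x hx0 hxR
    have hd2 : d - 1 - 1 = d - 2 := by omega
    have hc : ((d-1:ℕ):ℝ) = (d:ℝ) - 1 := by
      have : (1:ℕ) ≤ d := by omega
      push_cast [Nat.cast_sub this]; ring
    have hxp : x^(d-1) = x * x^(d-2) := by
      rw [← pow_succ']; congr 1; omega
    rw [hd2, hc, hxp]
    have hx0' : x ≠ 0 := ne_of_gt hx0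
    field_simp at heq
    linear_combination (-(x^(d-2))) * heq
  have hFmono : MonotoneOn F (Icc 0 R) := by
    apply monotoneOn_of_deriv_nonneg (convex_Icc 0 R)
    · have hcontu' : ContinuousOn (dS R₀ u) (SIco R₀) :=
        fun x hx => (hu.2.1 x hx).continuousWithinAt
      exact ContinuousOn.mul (continuousOn_pow _) (hcontu'.mono hIccRS)
    · intro x hx
      rw [interior_Icc] at hx
      exact (hFderiv x hx).differentiableAt.differentiableWithinAt
    · intro x hx
      rw [interior_Icc] at hx
      rw [(hFderiv x hx).deriv]
      have h1 : 0 < u x := hupos x ⟨hx.1.le, hx.2⟩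
      have h2 : h x ≤ 0 := hhle x ⟨hx.1.le, hx.2.le⟩
      have h3 : 0 ≤ x^(d-1) := pow_nonneg hx.1.le _
      have h4 : 0 ≤ x^2 - h x := by nlinarith [sq_nonneg x]
      exact mul_nonneg h3 (mul_nonneg h4 h1.le)
  have hF0 : F 0 = 0 := by
    simp only [hFdef]
    rw [zero_pow (by omega : d - 1 ≠ 0)]
    ring
  have hu'ge : ∀ x ∈ Ioo (0:ℝ) R, 0 ≤ dS R₀ u x := by
    intro x hx
    have hFge : 0 ≤ F x := by
      rw [← hF0]
      exact hFmono (left_mem_Icc.2 hR0.le) ⟨hx.1.le, hx.2.le⟩ hx.1.le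
    simp only [hFdef] at hFge
    have hp : 0 < x^(d-1) := pow_pos hx.1 _
    nlinarith [hFge, hp]
  have humono : MonotoneOn u (Icc 0 R) := by
    apply monotoneOn_of_deriv_nonneg (convex_Icc 0 R) (hcontu.mono hIccRS)
    · intro x hx
      rw [interior_Icc] at hx
      obtain ⟨hx0, hxR⟩ := hIooS hx
      exact (hder hu.1 hx0 hxR).differentiableAt.differentiableWithinAt
    · intro x hx
      rw [interior_Icc] at hx
      obtain ⟨hx0, hxR⟩ := hIooS hx
      rw [(hder hu.1 hx0 hxR).deriv]
      exact hu'ge x hx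
  have : b ≤ u R := by
    have := humono (left_mem_Icc.2 hR0.le) (right_mem_Icc.2 hR0.le) hR0.le
    rwa [hu0] at this
  have : u R ≤ 0 := hRK.2
  linarith
end

section
/- Let d ≥ 4 be an integer, b > 0, and R₀ ∈ (0,∞]. Suppose u ∈ C²([0,R₀)) solves u″ + ((d−1)/r)u′ − r²u + u³ = 0 on (0,R₀) with initial conditions u(0) = b and u′(0) = 0. Then u(r) > 0 for every r ∈ [0,R₀). -/
open Set
open scoped ENNReal

/-- In critical and supercritical dimensions `d ≥ 4`, the solution of the radial
Gross–Pitaevskii equation at zero frequency, `u'' + ((d-1)/r)u' - r²u + u³ = 0`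
with `u(0) = b > 0`, `u'(0) = 0`, stays positive on its domain `[0, R₀)`. -/
theorem stmt12 (d : ℕ) (hd : 4 ≤ d) (b : ℝ) (hb : 0 < b)
    (R₀ : ℝ≥0∞) (hR₀ : 0 < R₀)
    (u : ℝ → ℝ) (hu : C2OnS R₀ u)
    (hequ : ∀ r : ℝ, 0 < r → ENNReal.ofReal r < R₀ →
      dS R₀ (dS R₀ u) r + ((d:ℝ) - 1) / r * dS R₀ u r - r^2 * u r + (u r)^3 = 0)
    (hu0 : u 0 = b) (hu'0 : dS R₀ u 0 = 0) :
    ∀ r ∈ SIco R₀, 0 < u r := by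
  obtain ⟨k, rfl⟩ : ∃ k, d = k + 4 := ⟨d - 4, by omega⟩
  set v := dS R₀ u with hv_def
  set w := dS R₀ v with hw_def
  by_contra hcon
  push_neg at hcon
  obtain ⟨r₁, hr₁S, hr₁⟩ := hcon
  have hcu : ContinuousOn u (SIco R₀) := fun x hx => (hu.1 x hx).continuousWithinAt
  have hcv : ContinuousOn v (SIco R₀) := fun x hx => (hu.2.1 x hx).continuousWithinAt
  have hr₁0 : 0 < r₁ := by
    rcases hr₁S.1.lt_or_eq with h | h
    · exact h
    · exfalso; rw [← h, hu0] at hr₁; linarith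
  have hsub1 : Icc (0:ℝ) r₁ ⊆ SIco R₀ := by
    intro x hx
    exact ⟨hx.1, lt_of_le_of_lt (ENNReal.ofReal_le_ofReal hx.2) hr₁S.2⟩
  -- find a zero of u
  obtain ⟨R, hRmem, huR⟩ : ∃ R ∈ Icc (0:ℝ) r₁, u R = 0 := by
    have h0 : (0:ℝ) ∈ Icc (u r₁) (u 0) := ⟨hr₁, by rw [hu0]; exact hb.le⟩
    obtain ⟨R, hR, hval⟩ := intermediate_value_Icc' hr₁0.le (hcu.mono hsub1) h0
    exact ⟨R, hR, hval⟩
  have hR0 : 0 < R := by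
    rcases hRmem.1.lt_or_eq with h | h
    · exact h
    · exfalso; rw [← h, hu0] at huR; linarith
  have hRS : R ∈ SIco R₀ := hsub1 hRmem
  have hsub : Icc (0:ℝ) R ⊆ SIco R₀ := by
    intro x hx
    exact ⟨hx.1, lt_of_le_of_lt (ENNReal.ofReal_le_ofReal hx.2) hRS.2⟩
  have hIooSub : Ioo (0:ℝ) R ⊆ SIco R₀ := fun x hx => hsub ⟨hx.1.le, hx.2.le⟩
  have hnhds : ∀ r ∈ Ioo (0:ℝ) R, SIco R₀ ∈ nhds r := by
    intro r hr
    exact mem_nhds_iff.mpr ⟨Ioo 0 R, hIooSub, isOpen_Ioo, hr⟩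
  -- the Pohozaev-type energy
  set E : ℝ → ℝ := fun x => 2*x^(k+4)*(v x)^2 - 2*x^(k+6)*(u x)^2 + x^(k+4)*(u x)^4
      + ((k:ℝ)+4)*x^(k+3)*(v x)*(u x) with hE_def
  have hE0 : E 0 = 0 := by simp [hE_def]
  have hER : 0 ≤ E R := by
    have : E R = 2*R^(k+4)*(v R)^2 := by simp [hE_def, huR]
    rw [this]; positivity
  -- derivative of E at interior points
  have hEderiv : ∀ r ∈ Ioo (0:ℝ) R,
      HasDerivAt E (-((k:ℝ)*(v r)^2*r^(k+3)) - ((k:ℝ)+8)*r^(k+5)*(u r)^2) r := by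
    intro r hr
    have hn := hnhds r hr
    have hUd : HasDerivAt u (v r) r := by
      have h1 := (hu.1 r (hIooSub hr)).differentiableAt hn
      have h2 : v r = deriv u r := derivWithin_of_mem_nhds hn
      rw [h2]; exact h1.hasDerivAt
    have hVd : HasDerivAt v (w r) r := by
      have h1 := (hu.2.1 r (hIooSub hr)).differentiableAt hn
      have h2 : w r = deriv v r := derivWithin_of_mem_nhds hn
      rw [h2]; exact h1.hasDerivAt
    have hODE := hequ r hr.1 (hIooSub hr).2
    have hrne : r ≠ 0 := ne_of_gt hr.1
    have hW : w r = r^2 * u r - (u r)^3 - ((k:ℝ)+3)/r * v r := by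
      have : ((k + 4 : ℕ) : ℝ) - 1 = (k:ℝ)+3 := by try push_cast; try ring
      rw [this] at hODE
      linarith
    have hA : HasDerivAt (fun x : ℝ => 2*x^(k+4)*(v x)^2)
        (2*(((k:ℝ)+4)*r^(k+3))*(v r)^2 + 2*r^(k+4)*(2*(v r)*(w r))) r := by
      have hp : HasDerivAt (fun x : ℝ => 2*x^(k+4)) (2*(((k:ℝ)+4)*r^(k+3))) r := by
        have := (hasDerivAt_pow (k+4) r).const_mul (2:ℝ)
        refine this.congr_deriv ?_
        rw [show k + 4 - 1 = k + 3 by omega]; push_cast; ring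
      have hq : HasDerivAt (fun x => (v x)^2) (2*(v r)*(w r)) r := by
        have := hVd.pow 2
        refine this.congr_deriv ?_
        norm_num
      exact hp.mul hq
    have hB : HasDerivAt (fun x : ℝ => 2*x^(k+6)*(u x)^2)
        (2*(((k:ℝ)+6)*r^(k+5))*(u r)^2 + 2*r^(k+6)*(2*(u r)*(v r))) r := by
      have hp : HasDerivAt (fun x : ℝ => 2*x^(k+6)) (2*(((k:ℝ)+6)*r^(k+5))) r := by
        have := (hasDerivAt_pow (k+6) r).const_mul (2:ℝ)
        refine this.congr_deriv ?_
        rw [show k + 6 - 1 = k + 5 by omega]; push_cast; ring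
      have hq : HasDerivAt (fun x => (u x)^2) (2*(u r)*(v r)) r := by
        have := hUd.pow 2
        refine this.congr_deriv ?_
        norm_num
      exact hp.mul hq
    have hC : HasDerivAt (fun x : ℝ => x^(k+4)*(u x)^4)
        ((((k:ℝ)+4)*r^(k+3))*(u r)^4 + r^(k+4)*(4*(u r)^3*(v r))) r := by
      have hp : HasDerivAt (fun x : ℝ => x^(k+4)) (((k:ℝ)+4)*r^(k+3)) r := by
        have := hasDerivAt_pow (k+4) r
        refine this.congr_deriv ?_
        rw [show k + 4 - 1 = k + 3 by omega]; push_cast; ring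
      have hq : HasDerivAt (fun x => (u x)^4) (4*(u r)^3*(v r)) r := by
        have := hUd.pow 4
        refine this.congr_deriv ?_
        norm_num
      exact hp.mul hq
    have hD : HasDerivAt (fun x : ℝ => ((k:ℝ)+4)*x^(k+3)*(v x)*(u x))
        (((((k:ℝ)+4)*(((k:ℝ)+3)*r^(k+2)))*(v r) + (((k:ℝ)+4)*r^(k+3))*(w r))*(u r)
          + (((k:ℝ)+4)*r^(k+3))*(v r)*(v r)) r := by
      have hp : HasDerivAt (fun x : ℝ => ((k:ℝ)+4)*x^(k+3)) (((k:ℝ)+4)*(((k:ℝ)+3)*r^(k+2))) r := by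
        have := (hasDerivAt_pow (k+3) r).const_mul ((k:ℝ)+4)
        refine this.congr_deriv ?_
        rw [show k + 3 - 1 = k + 2 by omega]; push_cast; ring
      exact (hp.mul hVd).mul hUd
    have hE : HasDerivAt E
        ((2*(((k:ℝ)+4)*r^(k+3))*(v r)^2 + 2*r^(k+4)*(2*(v r)*(w r))
          - (2*(((k:ℝ)+6)*r^(k+5))*(u r)^2 + 2*r^(k+6)*(2*(u r)*(v r))))
          + ((((k:ℝ)+4)*r^(k+3))*(u r)^4 + r^(k+4)*(4*(u r)^3*(v r)))
          + (((((k:ℝ)+4)*(((k:ℝ)+3)*r^(k+2)))*(v r) + (((k:ℝ)+4)*r^(k+3))*(w r))*(u r)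
            + (((k:ℝ)+4)*r^(k+3))*(v r)*(v r))) r :=
      ((hA.sub hB).add hC).add hD
    convert hE using 1
    rw [hW]
    field_simp
    ring
  -- E is antitone on [0,R]
  have hEcont : ContinuousOn E (Icc 0 R) := by
    have hcu' : ContinuousOn u (Icc 0 R) := hcu.mono hsub
    have hcv' : ContinuousOn v (Icc 0 R) := hcv.mono hsub
    apply ContinuousOn.add
    apply ContinuousOn.add
    apply ContinuousOn.sub
    · exact ((continuousOn_const.mul ((continuous_pow (k+4)).continuousOn)).mul (hcv'.pow 2))
    · exact ((continuousOn_const.mul ((continuous_pow (k+6)).continuousOn)).mul (hcu'.pow 2))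
    · exact (((continuous_pow (k+4)).continuousOn).mul (hcu'.pow 4))
    · exact (((continuousOn_const.mul ((continuous_pow (k+3)).continuousOn)).mul hcv').mul hcu')
  have hderiv_eq : ∀ r ∈ Ioo (0:ℝ) R,
      deriv E r = -((k:ℝ)*(v r)^2*r^(k+3)) - ((k:ℝ)+8)*r^(k+5)*(u r)^2 :=
    fun r hr => (hEderiv r hr).deriv
  have hanti : AntitoneOn E (Icc 0 R) := by
    apply antitoneOn_of_deriv_nonpos (convex_Icc 0 R) hEcont
    · intro x hx
      rw [interior_Icc] at hx
      exact ((hEderiv x hx).differentiableAt).differentiableWithinAt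
    · intro x hx
      rw [interior_Icc] at hx
      rw [hderiv_eq x hx]
      have h1 : 0 ≤ (k:ℝ)*(v x)^2*x^(k+3) := by
        have : (0:ℝ) ≤ x := hx.1.le
        positivity
      have h2 : 0 ≤ ((k:ℝ)+8)*x^(k+5)*(u x)^2 := by
        have : (0:ℝ) ≤ x := hx.1.le
        positivity
      linarith
  -- region near 0 where u > b/2
  set S : Set ℝ := {x ∈ Icc (0:ℝ) R | u x ≤ b/2} with hS_def
  have hSne : S.Nonempty := ⟨R, ⟨⟨hR0.le, le_refl R⟩, by rw [huR]; linarith⟩⟩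
  have hSbdd : BddBelow S := ⟨0, fun x hx => hx.1.1⟩
  have hcu' : ContinuousOn u (Icc 0 R) := hcu.mono hsub
  have hSclosed : IsClosed S :=
    hcu'.preimage_isClosed_of_isClosed isClosed_Icc isClosed_Iic
  set ε := sInf S with hε_def
  have hεS : ε ∈ S := hSclosed.csInf_mem hSne hSbdd
  have hε0 : 0 < ε := by
    rcases hεS.1.1.lt_or_eq with h | h
    · exact h
    · exfalso
      have := hεS.2
      rw [← h, hu0] at this
      linarith
  have hεR : ε ≤ R := hεS.1.2
  have hupos : ∀ x ∈ Ioo (0:ℝ) ε, b/2 < u x := by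
    intro x hx
    by_contra h
    push_neg at h
    have hxS : x ∈ S := ⟨⟨hx.1.le, le_trans hx.2.le hεR⟩, h⟩
    have := csInf_le hSbdd hxS
    linarith [hx.2]
  have hstrict : StrictAntiOn E (Icc 0 ε) := by
    apply strictAntiOn_of_deriv_neg (convex_Icc 0 ε)
      (hEcont.mono (Icc_subset_Icc_right hεR))
    intro x hx
    rw [interior_Icc] at hx
    have hx' : x ∈ Ioo (0:ℝ) R := ⟨hx.1, lt_of_lt_of_le hx.2 hεR⟩
    rw [hderiv_eq x hx']
    have h1 : 0 ≤ (k:ℝ)*(v x)^2*x^(k+3) := by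
      have : (0:ℝ) ≤ x := hx.1.le
      positivity
    have hux : 0 < u x := lt_trans (by linarith) (hupos x hx)
    have h2 : 0 < ((k:ℝ)+8)*x^(k+5)*(u x)^2 :=
      mul_pos (mul_pos (by positivity) (pow_pos hx.1 (k+5))) (pow_pos hux 2)
    linarith
  have hEε : E ε < 0 := by
    have := hstrict (left_mem_Icc.mpr hε0.le) (right_mem_Icc.mpr hε0.le) hε0
    rw [hE0] at this
    exact this
  have hEleq : E R ≤ E ε := hanti ⟨hε0.le, hεR⟩ ⟨hR0.le, le_refl R⟩ hεR
  linarith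
end

section
/- Let d ≥ 3 be an integer, b > 0, c ∈ ℝ, and let u, h ∈ C²([0,∞)) solve the SNH shooting system in dimension d on (0,∞) with initial conditions u(0) = b, h(0) = c, u′(0) = h′(0) = 0. Then: (i) for every r > 0, h′(r) = −r^{1−d} ∫₀^r u(s)² s^{d−1} ds, so h is nonincreasing and h(r) ≤ c for all r ≥ 0; (ii) if u(r) converges to a finite limit L as r → ∞, then L = 0. -/
open Set MeasureTheory Filter

lemma hasDerivAt_of_dwa {u : ℝ → ℝ}
    (hu : ∀ r ∈ Ici (0:ℝ), DifferentiableWithinAt ℝ u (Ici 0) r) {x : ℝ} (hx : 0 < x) :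
    HasDerivAt u (dI u x) x := by
  have hmem : Ici (0:ℝ) ∈ nhds x := Ici_mem_nhds hx
  have h1 := (hu x hx.le).differentiableAt hmem
  have h2 : dI u x = deriv u x := derivWithin_of_mem_nhds hmem
  rw [h2]; exact h1.hasDerivAt

/-- Integral representation lemma: if `f'' + (n/r) f' = g` on `(0,∞)` with `f'(0) = 0`,
then `r^n f'(r) = ∫₀^r g(s) s^n ds`. -/
lemma rep (n : ℕ) (hn : 1 ≤ n) (f g : ℝ → ℝ) (hf : C2Ici f)
    (hg : ContinuousOn g (Ici 0))
    (hode : ∀ r : ℝ, 0 < r → dI (dI f) r + (n:ℝ)/r * dI f r = g r)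
    (hf'0 : dI f 0 = 0) :
    ∀ r : ℝ, 0 < r → r^n * dI f r = ∫ s in (0:ℝ)..r, g s * s^n := by
  intro r hr
  have hG : ∀ x ∈ Ioo (0:ℝ) r, HasDerivAt (fun y => y^n * dI f y) (g x * x^n) x := by
    intro x hx
    have hx0 : (0:ℝ) < x := hx.1
    have hd2 : HasDerivAt (dI f) (dI (dI f) x) x := hasDerivAt_of_dwa hf.2.1 hx0
    have hpow : HasDerivAt (fun y : ℝ => y^n) ((n:ℝ) * x^(n-1)) x := hasDerivAt_pow n x
    have := hpow.mul hd2
    refine HasDerivAt.congr_deriv (f := fun y => y^n * dI f y) this ?_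
    have hode' := hode x hx0
    have hxne : x ≠ 0 := ne_of_gt hx0
    have hxp : x^(n-1) * x = x^n := by
      rw [← pow_succ, Nat.sub_add_cancel hn]
    have : dI (dI f) x = g x - (n:ℝ)/x * dI f x := by linarith
    rw [this, ← hxp]
    field_simp
    ring
  have hcont : ContinuousOn (fun y => y^n * dI f y) (Icc 0 r) := by
    apply ContinuousOn.mul
    · exact (continuous_pow n).continuousOn
    · have : ContinuousOn (dI f) (Ici 0) := fun y hy => (hf.2.1 y hy).continuousWithinAt
      exact this.mono Icc_subset_Ici_self
  have hint : IntervalIntegrable (fun s => g s * s^n) volume 0 r := by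
    apply ContinuousOn.intervalIntegrable
    apply ContinuousOn.mul
    · exact hg.mono (by rw [uIcc_of_le hr.le]; exact Icc_subset_Ici_self)
    · exact (continuous_pow n).continuousOn
  have := intervalIntegral.integral_eq_sub_of_hasDeriv_right_of_le hr.le hcont
    (fun x hx => (hG x hx).hasDerivWithinAt) hint
  rw [this, hf'0, mul_zero, sub_zero]

set_option maxHeartbeats 1000000 in
/-- If `u → L > 0` at infinity, the integral representation of `u'` forces a contradiction. -/
lemma noPosLimit (n : ℕ) (c L : ℝ) (u w h : ℝ → ℝ)
    (hhc : ∀ s : ℝ, 0 ≤ s → h s ≤ c)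
    (hucont : ContinuousOn u (Ici 0))
    (hhcont : ContinuousOn h (Ici 0))
    (hwcont : ContinuousOn w (Ici 0))
    (hrep : ∀ r : ℝ, 0 < r → r^n * w r = ∫ s in (0:ℝ)..r, (s^2 - h s) * u s * s^n)
    (hftc : ∀ R r : ℝ, 0 < R → R ≤ r → u r - u R = ∫ s in R..r, w s)
    (hlim : Tendsto u atTop (nhds L)) (hL : 0 < L) : False := by
  set g : ℝ → ℝ := fun s => (s^2 - h s) * u s * s^n with hg
  have hgcont : ContinuousOn g (Ici 0) := by
    apply ContinuousOn.mul
    · exact (((continuous_pow 2).continuousOn.sub hhcont)).mul hucont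
    · exact (continuous_pow n).continuousOn
  have h1 : ∀ᶠ s in atTop, L/2 < u s := hlim.eventually (eventually_gt_nhds (by linarith))
  obtain ⟨R₀', hR₀'⟩ := eventually_atTop.1 h1
  set R₀ : ℝ := max R₀' (max 1 (|c|+1)) with hR₀def
  have hR₀1 : (1:ℝ) ≤ R₀ := le_trans (le_max_left 1 (|c|+1)) (le_max_right _ _)
  have hR₀c : |c| + 1 ≤ R₀ := le_trans (le_max_right 1 (|c|+1)) (le_max_right _ _)
  have hR₀u : ∀ s, R₀ ≤ s → L/2 < u s := fun s hs => hR₀' s (le_trans (le_max_left _ _) hs)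
  have hR₀0 : (0:ℝ) < R₀ := by linarith
  have hfacts : ∀ s, R₀ ≤ s → 1 ≤ s^2 - h s ∧ L/2 < u s := by
    intro s hs
    have hs0 : (0:ℝ) ≤ s := by linarith
    have hhs := hhc s hs0
    have hac : c ≤ |c| := le_abs_self c
    constructor
    · nlinarith
    · exact hR₀u s hs
  have hgnonneg : ∀ s, R₀ ≤ s → 0 ≤ g s := by
    intro s hs
    obtain ⟨h1', h2'⟩ := hfacts s hs
    have hs0 : (0:ℝ) ≤ s := by linarith
    show (0:ℝ) ≤ (s^2 - h s) * u s * s^n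
    have h3' : (0:ℝ) ≤ s^n := by positivity
    exact mul_nonneg (mul_nonneg (by linarith) (by linarith)) h3'
  have hgint : ∀ a b : ℝ, 0 ≤ a → a ≤ b → IntervalIntegrable g volume a b := by
    intro a b ha hab
    apply ContinuousOn.intervalIntegrable
    apply hgcont.mono
    rw [uIcc_of_le hab]
    intro x hx; exact le_trans ha hx.1
  set C : ℝ := ∫ s in (0:ℝ)..R₀, g s with hC
  set t₂ : ℝ := max R₀ (max (c+1) ((2^n + |C|) * (2/L))) with ht₂
  have ht₂R₀ : R₀ ≤ t₂ := le_max_left _ _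
  have ht₂0 : 0 < t₂ := lt_of_lt_of_le hR₀0 ht₂R₀
  have hwge : ∀ r, 2 * t₂ ≤ r → 1 ≤ w r := by
    intro r hrt
    set t : ℝ := r / 2 with htdef
    have htt₂ : t₂ ≤ t := by rw [htdef]; linarith
    have htR₀ : R₀ ≤ t := le_trans ht₂R₀ htt₂
    have ht1 : (1:ℝ) ≤ t := le_trans hR₀1 htR₀
    have ht0 : (0:ℝ) < t := by linarith
    have hr0 : (0:ℝ) < r := by rw [htdef] at ht0; linarith
    have htr : t ≤ r := by rw [htdef]; linarith
    have hsplit : (∫ s in (0:ℝ)..r, g s)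
        = (∫ s in (0:ℝ)..R₀, g s) + (∫ s in R₀..t, g s) + (∫ s in t..r, g s) := by
      rw [intervalIntegral.integral_add_adjacent_intervals (hgint 0 R₀ le_rfl hR₀0.le)
        (hgint R₀ t hR₀0.le htR₀),
        intervalIntegral.integral_add_adjacent_intervals (hgint 0 t le_rfl ht0.le)
        (hgint t r ht0.le htr)]
    have hmid : 0 ≤ ∫ s in R₀..t, g s :=
      intervalIntegral.integral_nonneg htR₀ (fun s hs => hgnonneg s hs.1)
    set K : ℝ := (t^2 - c) * (L/2) * t^n with hK
    have hlast : K * (r - t) ≤ ∫ s in t..r, g s := by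
      have hmono : ∀ s ∈ Icc t r, K ≤ g s := by
        intro s hs
        obtain ⟨hg1, hg2⟩ := hfacts s (le_trans htR₀ hs.1)
        have hs0 : (0:ℝ) < s := lt_of_lt_of_le ht0 hs.1
        have hpow : t^n ≤ s^n := pow_le_pow_left₀ ht0.le hs.1 n
        have hsq : t^2 - c ≤ s^2 - h s := by
          have := hhc s hs0.le
          nlinarith [hs.1]
        have htc : (0:ℝ) < t^2 - c := by
          have : c ≤ |c| := le_abs_self c
          nlinarith [hR₀c, htR₀]
        have h5 : (t^2 - c) * (L/2) ≤ (s^2 - h s) * u s := by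
          apply mul_le_mul hsq hg2.le (by linarith) (by linarith)
        calc K = (t^2 - c) * (L/2) * t^n := rfl
          _ ≤ (s^2 - h s) * u s * s^n := by
              apply mul_le_mul h5 hpow (by positivity) (by nlinarith)
      calc K * (r - t) = ∫ s in t..r, K := by
            rw [intervalIntegral.integral_const, smul_eq_mul]; ring
        _ ≤ ∫ s in t..r, g s :=
            intervalIntegral.integral_mono_on htr intervalIntegrable_const
              (hgint t r ht0.le htr) hmono
    have hrw := hrep r hr0
    have hbound : C + K * (r - t) ≤ r^n * w r := by
      rw [hrw, hsplit]; linarith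
    have htc1 : c + 1 ≤ t := le_trans (le_trans (le_max_left _ _) (le_max_right R₀ _)) htt₂
    have htL : (2^n + |C|) * (2/L) ≤ t :=
      le_trans (le_trans (le_max_right (c+1) _) (le_max_right R₀ _)) htt₂
    have htn1 : (1:ℝ) ≤ t^n := by
      simpa using pow_le_pow_left₀ (by norm_num) ht1 n
    have hB : (2:ℝ)^n + |C| ≤ (t^2 - c) * (L/2) * t := by
      have h6 : (L/2) * t ≥ 2^n + |C| := by
        have hLpos : (0:ℝ) < L/2 := by linarith
        calc (2:ℝ)^n + |C| = ((2^n + |C|) * (2/L)) * (L/2) := by field_simp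
          _ ≤ t * (L/2) := by nlinarith [htL, hLpos]
          _ = (L/2) * t := by ring
      have h7 : (1:ℝ) ≤ t^2 - c := by nlinarith
      have h8 : (0:ℝ) ≤ (L/2) * t := mul_nonneg (by linarith) ht0.le
      nlinarith [h6, h7, h8, mul_le_mul_of_nonneg_right h7 h8]
    have hrn : r^n ≤ C + K * (r - t) := by
      have hrt2 : r = 2 * t := by rw [htdef]; ring
      have hrn2 : r^n = 2^n * t^n := by rw [hrt2, mul_pow]
      have hkey : t^n * (2^n + |C|) ≤ t^n * ((t^2 - c) * (L/2) * t) :=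
        mul_le_mul_of_nonneg_left hB (by positivity)
      have habs : |C| * 1 ≤ |C| * t^n := mul_le_mul_of_nonneg_left htn1 (abs_nonneg C)
      have hnegabs : -|C| ≤ C := neg_abs_le C
      have : K * (r - t) = t^n * ((t^2 - c) * (L/2) * t) := by rw [hK, hrt2]; ring
      rw [this, hrn2]
      nlinarith [hkey, habs, hnegabs]
    have hfin : r^n ≤ r^n * w r := le_trans hrn hbound
    have hrnpos : (0:ℝ) < r^n := by positivity
    nlinarith [hfin, hrnpos]
  set R₂ : ℝ := 2 * t₂ with hR₂
  have hR₂0 : 0 < R₂ := by positivity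
  have hgrow : ∀ r, R₂ ≤ r → u R₂ + (r - R₂) ≤ u r := by
    intro r hr
    have hft := hftc R₂ r hR₂0 hr
    have hint1 : IntervalIntegrable w volume R₂ r := by
      apply ContinuousOn.intervalIntegrable
      apply hwcont.mono
      rw [uIcc_of_le hr]
      intro x hx; exact le_trans hR₂0.le hx.1
    have : (r - R₂) = ∫ s in R₂..r, (1:ℝ) := by
      rw [intervalIntegral.integral_const, smul_eq_mul, mul_one]
    have hmono : (∫ s in R₂..r, (1:ℝ)) ≤ ∫ s in R₂..r, w s :=
      intervalIntegral.integral_mono_on hr intervalIntegrable_const hint1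
        (fun s hs => hwge s hs.1)
    linarith [hft, hmono, this]
  have h2 : ∀ᶠ r in atTop, u r < L + 1 := hlim.eventually (eventually_lt_nhds (by linarith))
  obtain ⟨r₃, hr₃⟩ := eventually_atTop.1 h2
  set r : ℝ := max r₃ (max R₂ (R₂ + L + 1 - u R₂)) with hr
  have hra : r₃ ≤ r := le_max_left _ _
  have hrb : R₂ ≤ r := le_trans (le_max_left R₂ _) (le_max_right _ _)
  have hrc : R₂ + L + 1 - u R₂ ≤ r := le_trans (le_max_right R₂ _) (le_max_right _ _)
  have := hgrow r hrb
  have := hr₃ r hra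
  linarith

/-- Basic properties of solutions of the SNH shooting system: the integral
representation of `h'`, monotonicity of `h`, and the fact that the only possible
finite limit of `u` at infinity is zero. -/
theorem stmt13 (d : ℕ) (hd : 3 ≤ d) (b c : ℝ) (hb : 0 < b)
    (u h : ℝ → ℝ) (hu : C2Ici u) (hh : C2Ici h)
    (hequ : ∀ r : ℝ, 0 < r →
      dI (dI u) r + ((d:ℝ) - 1) / r * dI u r - r^2 * u r + h r * u r = 0)
    (heqh : ∀ r : ℝ, 0 < r →
      dI (dI h) r + ((d:ℝ) - 1) / r * dI h r + (u r)^2 = 0)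
    (hu0 : u 0 = b) (hh0 : h 0 = c)
    (hu'0 : dI u 0 = 0) (hh'0 : dI h 0 = 0) :
    (∀ r : ℝ, 0 < r →
      dI h r = -(∫ s in (0:ℝ)..r, (u s)^2 * s^(d-1)) / r^(d-1))
    ∧ AntitoneOn h (Ici 0)
    ∧ (∀ r : ℝ, 0 ≤ r → h r ≤ c)
    ∧ (∀ L : ℝ, Tendsto u atTop (nhds L) → L = 0) := by
  have hcast : ((d-1:ℕ):ℝ) = (d:ℝ) - 1 := by
    rw [Nat.cast_sub (by omega), Nat.cast_one]
  have hucont : ContinuousOn u (Ici 0) := fun y hy => (hu.1 y hy).continuousWithinAt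
  have hhcont : ContinuousOn h (Ici 0) := fun y hy => (hh.1 y hy).continuousWithinAt
  have hu'cont : ContinuousOn (dI u) (Ici 0) := fun y hy => (hu.2.1 y hy).continuousWithinAt
  -- integral representation of h'
  have hrepH := rep (d-1) (by omega) h (fun s => -(u s)^2) hh
    ((hucont.pow 2).neg)
    (fun r hr => by have := heqh r hr; rw [hcast]; linarith)
    hh'0
  have part1 : ∀ r : ℝ, 0 < r →
      dI h r = -(∫ s in (0:ℝ)..r, (u s)^2 * s^(d-1)) / r^(d-1) := by
    intro r hr
    have h1 := hrepH r hr
    have h2 : (∫ s in (0:ℝ)..r, (-(u s)^2) * s^(d-1))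
        = -∫ s in (0:ℝ)..r, (u s)^2 * s^(d-1) := by
      rw [← intervalIntegral.integral_neg]; congr 1; funext s; ring
    rw [h2] at h1
    have hrn : (0:ℝ) < r^(d-1) := by positivity
    field_simp
    linarith
  -- antitonicity
  have hanti : AntitoneOn h (Ici 0) := by
    apply antitoneOn_of_deriv_nonpos (convex_Ici 0) hhcont
    · rw [interior_Ici]
      intro x hx
      exact ((hh.1 x (le_of_lt (show (0:ℝ) < x from hx))).differentiableAt (Ici_mem_nhds hx)).differentiableWithinAt
    · rw [interior_Ici]
      intro x hx
      have hx0 : (0:ℝ) < x := hx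
      have hder : deriv h x = dI h x := (derivWithin_of_mem_nhds (Ici_mem_nhds hx0)).symm
      rw [hder, part1 x hx0]
      have hnum : 0 ≤ ∫ s in (0:ℝ)..x, (u s)^2 * s^(d-1) :=
        intervalIntegral.integral_nonneg hx0.le (fun s hs => mul_nonneg (sq_nonneg _) (pow_nonneg hs.1 _))
      have hxp : (0:ℝ) < x^(d-1) := by positivity
      rw [neg_div]
      simpa using div_nonneg hnum hxp.le
  have hle : ∀ r : ℝ, 0 ≤ r → h r ≤ c := by
    intro r hr
    have := hanti (self_mem_Ici) hr hr
    rwa [hh0] at this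
  refine ⟨part1, hanti, hle, ?_⟩
  -- limit statement
  have hrepU := rep (d-1) (by omega) u (fun s => (s^2 - h s) * u s) hu
    (((continuous_pow 2).continuousOn.sub hhcont).mul hucont)
    (fun r hr => by have := hequ r hr; rw [hcast]; nlinarith [this])
    hu'0
  have hftc : ∀ R r : ℝ, 0 < R → R ≤ r → u r - u R = ∫ s in R..r, dI u s := by
    intro R r hR hRr
    symm
    apply intervalIntegral.integral_eq_sub_of_hasDeriv_right_of_le hRr
    · exact hucont.mono (fun x hx => le_trans hR.le hx.1)
    · intro x hx
      exact (hasDerivAt_of_dwa hu.1 (lt_trans hR hx.1)).hasDerivWithinAt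
    · apply ContinuousOn.intervalIntegrable
      apply hu'cont.mono
      rw [uIcc_of_le hRr]
      intro x hx
      exact le_trans hR.le hx.1
  intro L hlim
  by_contra hL0
  rcases lt_or_gt_of_ne hL0 with hneg | hpos
  · -- L < 0 : apply the lemma to -u
    apply noPosLimit (d-1) c (-L) (fun s => -u s) (fun s => -(dI u s)) h hle
      hucont.neg hhcont hu'cont.neg
      (fun r hr => by
        have h1 : r^(d-1) * dI u r = ∫ s in (0:ℝ)..r, (s^2 - h s) * u s * s^(d-1) :=
          hrepU r hr
        have h2 : (∫ s in (0:ℝ)..r, (s^2 - h s) * (-u s) * s^(d-1))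
            = -∫ s in (0:ℝ)..r, (s^2 - h s) * u s * s^(d-1) := by
          rw [← intervalIntegral.integral_neg]; congr 1; funext s; ring
        show r^(d-1) * -(dI u r) = ∫ s in (0:ℝ)..r, (s^2 - h s) * (-u s) * s^(d-1)
        rw [h2]; linarith)
      (fun R r hR hRr => by
        have h1 := hftc R r hR hRr
        show -u r - -u R = ∫ s in R..r, -dI u s
        rw [intervalIntegral.integral_neg]
        linarith)
      hlim.neg (by linarith)
  · exact noPosLimit (d-1) c L u (dI u) h hle hucont hhcont hu'cont hrepU hftc hlim hpos
end
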